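/- arXiv:0705.4662 — 9 statements merged into one kernel-verified Lean document; each statement's English description precedes it below -/
import Mathlib

section
/- There exist universal constants c, C > 0 such that for every n ≥ 1 and every element (x, j) of the lamplighter group G: c·(d_{Cₙ}(0, j) + M(x)) ≤ ρ((x, j), (∅, 0)) ≤ C·(d_{Cₙ}(0, j) + M(x)), where M(x) = max_{k ∈ x} (d_{Cₙ}(0, k) + 1) if x ≠ ∅ and M(∅) = 0. -/
open Finset

/-- The lamplighter group `C₂ ≀ Cₙ`: pairs `(x, j)` of a finite subset `x` of `ZMod n`
(the set of lit lamps) and a position `j ∈ ZMod n`. -/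
abbrev LL (n : ℕ) : Type := Finset (ZMod n) × ZMod n

namespace LL

/-- Multiplication `(x, g)·(y, k) = (x △ (y − g), g + k)` where
`y − g = {h : g + h ∈ y}`. -/
def gmul {n : ℕ} (a b : LL n) : LL n :=
  (symmDiff a.1 (b.1.image (fun h => h - a.2)), a.2 + b.2)

def gone (n : ℕ) : LL n := (∅, 0)

def ginv {n : ℕ} (a : LL n) : LL n := (a.1.image (fun h => h + a.2), -a.2)

instance instGroup (n : ℕ) : Group (LL n) where
  mul := gmul
  one := gone n
  inv := ginv
  mul_assoc a b c := by
    show gmul (gmul a b) c = gmul a (gmul b c)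
    unfold gmul
    refine Prod.ext ?_ (add_assoc _ _ _)
    simp only
    rw [Finset.image_symmDiff _ _ (sub_left_injective), Finset.image_image,
      symmDiff_assoc]
    congr 2
    ext t
    simp [sub_sub, add_comm]
  one_mul a := by
    show gmul (gone n) a = a
    unfold gmul gone
    refine Prod.ext ?_ (zero_add _)
    simp only [← Finset.bot_eq_empty, bot_symmDiff]
    simp
  mul_one a := by
    show gmul a (gone n) = a
    unfold gmul gone
    refine Prod.ext ?_ (add_zero _)
    show symmDiff a.1 (Finset.image _ ∅) = a.1
    rw [Finset.image_empty]
    exact symmDiff_bot a.1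
  inv_mul_cancel a := by
    show gmul (ginv a) a = gone n
    unfold gmul ginv gone
    refine Prod.ext ?_ (neg_add_cancel _)
    simp only
    have h : (fun h => h - -a.2) = (fun h : ZMod n => h + a.2) := by
      funext t; rw [sub_neg_eq_add]
    rw [h, symmDiff_self, Finset.bot_eq_empty]

end LL

/-- The word "distance" associated to a set `T ⊆ G`: the least `L` such
that `a⁻¹ * b` is a product of `L` elements of `T`. -/
noncomputable def wordDist {G : Type*} [Group G] (T : Set G) (a b : G) : ℕ :=
  sInf {L : ℕ | ∃ l : List G, l.length = L ∧ (∀ g ∈ l, g ∈ T) ∧ l.prod = a⁻¹ * b}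

/-- The two standard generators `s₁ = ({0}, 0)` and `s₂ = (∅, 1)` of the
lamplighter group. -/
def lampGens (n : ℕ) : Set (LL n) :=
  {(({0} : Finset (ZMod n)), (0 : ZMod n)), ((∅ : Finset (ZMod n)), (1 : ZMod n))}

/-- The word metric `ρ` on the lamplighter group with respect to
`{s₁, s₂, s₁⁻¹, s₂⁻¹}`. -/
noncomputable def lampRho (n : ℕ) (a b : LL n) : ℕ :=
  wordDist (lampGens n ∪ (lampGens n)⁻¹) a b

/-- The cycle metric on `ZMod n`: the least `|a|` over integers `a` with
`a ≡ j - k (mod n)`. -/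
noncomputable def cycDist (n : ℕ) (j k : ZMod n) : ℕ :=
  sInf {m : ℕ | ∃ a : ℤ, a.natAbs = m ∧ (a : ZMod n) = j - k}

/-- `M(x) = max_{k ∈ x} (d_{Cₙ}(0,k) + 1)`, with `M(∅) = 0`. -/
noncomputable def lampM (n : ℕ) (x : Finset (ZMod n)) : ℕ :=
  x.sup (fun k => cycDist n 0 k + 1)

/-! The quantity `max (d(0, j), M(x))` vanishes at the identity and grows by at most one under
left multiplication by a generator, so it bounds the word length from below; it is at least half
of `d(0, j) + M(x)`.

For the upper bound let `r = M(x) - 1`, so every lamp lies within cycle distance `r` of `0`. Sweep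
`r` steps in one direction lighting the lamps on that side, come back, do the same in the other
direction, come back (`6r + 2` moves in all), and finally walk to `j` along a shortest path. -/

section WordLength

variable {G : Type*} [Group G] {T : Set G}

def HasWordLE (T : Set G) (g : G) (L : ℕ) : Prop :=
  ∃ l : List G, l.length ≤ L ∧ (∀ t ∈ l, t ∈ T) ∧ l.prod = g

namespace HasWordLE

theorem one (L : ℕ) : HasWordLE T 1 L := ⟨[], by simp⟩

theorem of_mem {t : G} (ht : t ∈ T) : HasWordLE T t 1 := ⟨[t], by simp [ht]⟩

theorem mono {g : G} {L K : ℕ} (h : HasWordLE T g L) (hLK : L ≤ K) : HasWordLE T g K :=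
  let ⟨l, hl, hlT, hg⟩ := h
  ⟨l, hl.trans hLK, hlT, hg⟩

theorem mul {g h : G} {L K : ℕ} (hg : HasWordLE T g L) (hh : HasWordLE T h K) :
    HasWordLE T (g * h) (L + K) := by
  obtain ⟨l, hl, hlT, rfl⟩ := hg
  obtain ⟨m, hm, hmT, rfl⟩ := hh
  refine ⟨l ++ m, by simp only [List.length_append]; omega, ?_, List.prod_append⟩
  simpa only [List.mem_append, or_imp, forall_and] using ⟨hlT, hmT⟩

theorem mul_mem {g t : G} {L : ℕ} (hg : HasWordLE T g L) (ht : t ∈ T) :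
    HasWordLE T (g * t) (L + 1) :=
  hg.mul (of_mem ht)

theorem inv (hT : ∀ t ∈ T, t⁻¹ ∈ T) {g : G} {L : ℕ} (h : HasWordLE T g L) :
    HasWordLE T g⁻¹ L := by
  obtain ⟨l, hl, hlT, rfl⟩ := h
  refine ⟨(l.map (·⁻¹)).reverse, by simpa using hl, ?_, (List.prod_inv_reverse l).symm⟩
  intro t ht
  obtain ⟨s, hs, rfl⟩ := List.mem_map.mp (List.mem_reverse.mp ht)
  exact hT s (hlT s hs)

theorem apply_le {f : G → ℕ} (hf₁ : f 1 = 0) (hf : ∀ t ∈ T, ∀ g, f (t * g) ≤ f g + 1)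
    {g : G} {L : ℕ} (h : HasWordLE T g L) : f g ≤ L := by
  obtain ⟨l, hl, hlT, rfl⟩ := h
  refine le_trans ?_ hl
  clear hl
  induction l with
  | nil => simp [hf₁]
  | cons t l ih =>
    rw [List.prod_cons, List.length_cons]
    have ht : t ∈ T := hlT t List.mem_cons_self
    have hl : f l.prod ≤ l.length := ih fun s hs => hlT s (List.mem_cons_of_mem t hs)
    exact (hf t ht _).trans (Nat.add_le_add_right hl 1)

end HasWordLE

theorem wordDist_one_le (hT : ∀ t ∈ T, t⁻¹ ∈ T) {g : G} {L : ℕ} (h : HasWordLE T g L) :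
    wordDist T g 1 ≤ L := by
  obtain ⟨l, hl, hlT, hprod⟩ := h.inv hT
  exact le_trans (Nat.sInf_le ⟨l, rfl, hlT, by rw [hprod, mul_one]⟩) hl

theorem hasWordLE_wordDist_one (hT : ∀ t ∈ T, t⁻¹ ∈ T) {g : G} {L : ℕ}
    (h : HasWordLE T g L) : HasWordLE T g (wordDist T g 1) := by
  obtain ⟨l, -, hlT, hprod⟩ := h.inv hT
  obtain ⟨m, hm, hmT, hmprod⟩ := Nat.sInf_mem
    (s := {L : ℕ | ∃ l : List G, l.length = L ∧ (∀ t ∈ l, t ∈ T) ∧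
      l.prod = g⁻¹ * 1})
    ⟨l.length, l, rfl, hlT, by rw [hprod, mul_one]⟩
  have hword : HasWordLE T g⁻¹ (wordDist T g 1) := ⟨m, hm.le, hmT, by rw [hmprod, mul_one]⟩
  simpa only [inv_inv] using hword.inv hT

end WordLength

section CycDist

variable {n : ℕ}

theorem cycDist_le_natAbs {j k : ZMod n} {a : ℤ} (h : (a : ZMod n) = j - k) :
    cycDist n j k ≤ a.natAbs :=
  Nat.sInf_le ⟨a, rfl, h⟩

theorem exists_natAbs_eq_cycDist (j k : ZMod n) :
    ∃ a : ℤ, a.natAbs = cycDist n j k ∧ (a : ZMod n) = j - k :=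
  Nat.sInf_mem (s := {m : ℕ | ∃ a : ℤ, a.natAbs = m ∧ (a : ZMod n) = j - k})
    ⟨_, _, rfl, ZMod.intCast_zmod_cast (j - k)⟩

theorem cycDist_zero_zero : cycDist n 0 0 = 0 :=
  Nat.le_zero.mp (cycDist_le_natAbs (a := 0) (by simp))

theorem cycDist_zero_add_le (u v : ZMod n) :
    cycDist n 0 (u + v) ≤ cycDist n 0 u + cycDist n 0 v := by
  obtain ⟨a, ha, hau⟩ := exists_natAbs_eq_cycDist (n := n) 0 u
  obtain ⟨b, hb, hbv⟩ := exists_natAbs_eq_cycDist (n := n) 0 v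
  calc cycDist n 0 (u + v) ≤ (a + b).natAbs :=
        cycDist_le_natAbs (by push_cast; rw [hau, hbv]; ring)
    _ ≤ cycDist n 0 u + cycDist n 0 v := ha ▸ hb ▸ Int.natAbs_add_le a b

theorem cycDist_zero_sub_le (u v : ZMod n) :
    cycDist n 0 (u - v) ≤ cycDist n 0 u + cycDist n 0 v := by
  obtain ⟨a, ha, hau⟩ := exists_natAbs_eq_cycDist (n := n) 0 u
  obtain ⟨b, hb, hbv⟩ := exists_natAbs_eq_cycDist (n := n) 0 v
  calc cycDist n 0 (u - v) ≤ (a - b).natAbs :=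
        cycDist_le_natAbs (by push_cast; rw [hau, hbv]; ring)
    _ ≤ cycDist n 0 u + cycDist n 0 v := ha ▸ hb ▸ Int.natAbs_sub_le a b

theorem exists_nat_eq_neg_or_eq_of_cycDist_le {k : ZMod n} {r : ℕ} (hk : cycDist n 0 k ≤ r) :
    ∃ i ≤ r, k = -(i : ZMod n) ∨ k = i := by
  obtain ⟨a, ha, hak⟩ := exists_natAbs_eq_cycDist (n := n) 0 k
  refine ⟨a.natAbs, ha ▸ hk, ?_⟩
  rcases Int.natAbs_eq a with h | h
  · left; rw [← Int.cast_natCast, ← h, hak]; ring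
  · right; rw [← Int.cast_natCast, ← neg_eq_iff_eq_neg.mpr h]; push_cast; rw [hak]; ring

end CycDist

section LampM

variable {n : ℕ}

theorem lampM_le_iff {x : Finset (ZMod n)} {L : ℕ} :
    lampM n x ≤ L ↔ ∀ k ∈ x, cycDist n 0 k + 1 ≤ L :=
  Finset.sup_le_iff

theorem cycDist_add_one_le_lampM {x : Finset (ZMod n)} {k : ZMod n} (hk : k ∈ x) :
    cycDist n 0 k + 1 ≤ lampM n x :=
  Finset.le_sup (f := fun k => cycDist n 0 k + 1) hk

theorem lampM_symmDiff_le (x y : Finset (ZMod n)) :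
    lampM n (symmDiff x y) ≤ max (lampM n x) (lampM n y) :=
  (Finset.sup_mono symmDiff_subset_union).trans Finset.sup_union.le

theorem lampM_image_sub_le (x : Finset (ZMod n)) (u : ZMod n) :
    lampM n (x.image (· - u)) ≤ lampM n x + cycDist n 0 u := by
  simp only [lampM_le_iff, Finset.mem_image, forall_exists_index, and_imp,
    forall_apply_eq_imp_iff₂]
  intro k hk
  have := cycDist_zero_sub_le k u
  have := cycDist_add_one_le_lampM hk
  omega

theorem lampM_le_one_of_subset {x : Finset (ZMod n)} (hx : x ⊆ {0}) : lampM n x ≤ 1 :=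
  lampM_le_iff.mpr fun k hk => by rw [Finset.mem_singleton.mp (hx hk), cycDist_zero_zero]

end LampM

namespace LL

variable {n : ℕ}

def gensSymm (n : ℕ) : Set (LL n) := lampGens n ∪ (lampGens n)⁻¹

theorem mul_def (a b : LL n) : a * b = (symmDiff a.1 (b.1.image (· - a.2)), a.2 + b.2) := rfl

theorem one_def : (1 : LL n) = (∅, 0) := rfl

theorem inv_def (a : LL n) : a⁻¹ = (a.1.image (· + a.2), -a.2) := rfl

theorem inv_mem_gensSymm {t : LL n} (ht : t ∈ gensSymm n) : t⁻¹ ∈ gensSymm n :=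
  ht.elim (fun h => Or.inr (Set.inv_mem_inv.mpr h)) Or.inl

theorem gensSymm_eq : gensSymm n = {({0}, 0), (∅, 1), (∅, -1)} := by
  ext t
  simp only [gensSymm, lampGens, Set.mem_union, Set.mem_inv, Set.mem_insert_iff,
    Set.mem_singleton_iff, inv_eq_iff_eq_inv]
  simp only [inv_def, add_zero, image_singleton, neg_zero, image_empty]
  tauto

theorem toggle_mem_gensSymm : (({0}, 0) : LL n) ∈ gensSymm n := by simp [gensSymm_eq]

theorem step_mem_gensSymm : ((∅, 1) : LL n) ∈ gensSymm n := by simp [gensSymm_eq]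

theorem step_neg_mem_gensSymm : ((∅, -1) : LL n) ∈ gensSymm n := by simp [gensSymm_eq]

theorem fst_subset_and_cycDist_snd_le_of_mem {t : LL n} (ht : t ∈ gensSymm n) :
    t.1 ⊆ {0} ∧ cycDist n 0 t.2 ≤ 1 := by
  rw [gensSymm_eq] at ht
  rcases ht with rfl | rfl | rfl
  · exact ⟨subset_rfl, cycDist_zero_zero.trans_le zero_le_one⟩
  · exact ⟨empty_subset _, cycDist_le_natAbs (a := -1) (by simp)⟩
  · exact ⟨empty_subset _, cycDist_le_natAbs (a := 1) (by simp)⟩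

noncomputable def extent (g : LL n) : ℕ := max (cycDist n 0 g.2) (lampM n g.1)

theorem extent_one : extent (1 : LL n) = 0 := by
  simp [extent, one_def, cycDist_zero_zero, lampM]

theorem extent_mul_le {t : LL n} (ht : t ∈ gensSymm n) (g : LL n) :
    extent (t * g) ≤ extent g + 1 := by
  obtain ⟨ht₁, ht₂⟩ := fst_subset_and_cycDist_snd_le_of_mem ht
  have hpos := cycDist_zero_add_le t.2 g.2
  have hlamps := (lampM_symmDiff_le t.1 (g.1.image (· - t.2))).trans
    (max_le_max (lampM_le_one_of_subset ht₁) (lampM_image_sub_le g.1 t.2))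
  simp only [extent, mul_def, max_le_iff] at hpos hlamps ⊢
  omega

theorem extent_le_of_hasWordLE {g : LL n} {L : ℕ} (h : HasWordLE (gensSymm n) g L) :
    extent g ≤ L :=
  h.apply_le extent_one fun _ ht => extent_mul_le ht

theorem hasWordLE_walk {u : ZMod n} (hu : ((∅, u) : LL n) ∈ gensSymm n) (b : ℕ) :
    HasWordLE (gensSymm n) ((∅, (b : ZMod n) * u) : LL n) b := by
  induction b with
  | zero => simpa [one_def] using HasWordLE.one (T := gensSymm n) 0
  | succ b ih =>
    have hstep : ((∅, (b : ZMod n) * u) : LL n) * (∅, u) =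
        (∅, ((b + 1 : ℕ) : ZMod n) * u) := by
      simp [mul_def, add_mul]
    exact hstep ▸ ih.mul_mem hu

theorem hasWordLE_intCast (a : ℤ) :
    HasWordLE (gensSymm n) ((∅, (a : ZMod n)) : LL n) a.natAbs := by
  obtain ⟨m, rfl | rfl⟩ := Int.eq_nat_or_neg a
  · simpa using hasWordLE_walk (n := n) step_mem_gensSymm m
  · simpa using hasWordLE_walk (n := n) step_neg_mem_gensSymm m

theorem hasWordLE_position (j : ZMod n) :
    HasWordLE (gensSymm n) ((∅, j) : LL n) (cycDist n 0 j) := by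
  obtain ⟨a, ha, haj⟩ := exists_natAbs_eq_cycDist (n := n) 0 j
  have hneg : ((-a : ℤ) : ZMod n) = j := by push_cast; rw [haj]; ring
  simpa [hneg, ha] using hasWordLE_intCast (n := n) (-a)

/-- With this multiplication, `s₁` at cursor position `c` toggles the lamp at `-c`. -/
theorem hasWordLE_of_erase {x : Finset (ZMod n)} {c : ZMod n} {L : ℕ}
    (h : HasWordLE (gensSymm n) ((x.erase (-c), c) : LL n) L) :
    HasWordLE (gensSymm n) ((x, c) : LL n) (L + 1) := by
  by_cases hc : -c ∈ x
  · have htoggle : ((x.erase (-c), c) : LL n) * ({0}, 0) = (x, c) := by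
      simp only [mul_def, image_singleton, zero_sub, add_zero]
      rw [(disjoint_singleton_right.mpr (notMem_erase _ _)).symmDiff_eq_sup, sup_eq_union,
        union_comm, ← insert_eq, insert_erase hc]
    exact htoggle ▸ h.mul_mem toggle_mem_gensSymm
  · simpa [erase_eq_of_notMem hc] using h.mono (Nat.le_succ L)

theorem hasWordLE_sweep {u : ZMod n} (hu : ((∅, u) : LL n) ∈ gensSymm n) (B : ℕ)
    {x : Finset (ZMod n)} (hx : ∀ k ∈ x, ∃ i ≤ B, k = -((i : ZMod n) * u)) :
    HasWordLE (gensSymm n) ((x, (B : ZMod n) * u) : LL n) (2 * B + 1) := by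
  induction B generalizing x with
  | zero =>
    have hx₀ : x.erase (-((0 : ℕ) * u)) = ∅ := by
      refine eq_empty_of_forall_notMem fun k hk => ne_of_mem_erase hk ?_
      obtain ⟨i, hi, rfl⟩ := hx k (mem_of_mem_erase hk)
      rw [Nat.le_zero.mp hi]
    exact hasWordLE_of_erase (by rw [hx₀]; simpa [one_def] using HasWordLE.one (T := gensSymm n) 0)
  | succ B ih =>
    set e : ZMod n := -(((B + 1 : ℕ) : ZMod n) * u)
    have hrest : ∀ k ∈ x.erase e, ∃ i ≤ B, k = -((i : ZMod n) * u) := by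
      intro k hk
      obtain ⟨i, hi, rfl⟩ := hx k (mem_of_mem_erase hk)
      rcases hi.lt_or_eq with hi | rfl
      · exact ⟨i, by omega, rfl⟩
      · exact absurd rfl (ne_of_mem_erase hk)
    have hstep : ((x.erase e, (B : ZMod n) * u) : LL n) * (∅, u) =
        (x.erase e, ((B + 1 : ℕ) : ZMod n) * u) := by
      simp [mul_def, add_mul]
    exact (hasWordLE_of_erase (hstep ▸ (ih hrest).mul_mem hu)).mono (by omega)

theorem hasWordLE_lamps (x : Finset (ZMod n)) :
    HasWordLE (gensSymm n) ((x, 0) : LL n) (6 * lampM n x) := by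
  classical
  rcases x.eq_empty_or_nonempty with rfl | ⟨k₀, hk₀⟩
  · exact HasWordLE.one _
  have hM := cycDist_add_one_le_lampM hk₀
  set r := lampM n x - 1
  have hr : ∀ k ∈ x, ∃ i ≤ r, k = -(i : ZMod n) ∨ k = i := fun k hk =>
    exists_nat_eq_neg_or_eq_of_cycDist_le (by have := cycDist_add_one_le_lampM hk; omega)
  set p : ZMod n → Prop := fun k => ∃ i ≤ r, k = -((i : ZMod n) * 1)
  have hP : ∀ k ∈ x.filter p, p k := fun k hk => (mem_filter.mp hk).2
  have hN : ∀ k ∈ x.filter (¬p ·), ∃ i ≤ r, k = -((i : ZMod n) * -1) := by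
    intro k hk
    obtain ⟨hkx, hkp⟩ := mem_filter.mp hk
    obtain ⟨i, hi, hneg | hpos⟩ := hr k hkx
    · exact absurd ⟨i, hi, by simpa using hneg⟩ hkp
    · exact ⟨i, hi, by simpa using hpos⟩
  have hsplit : ((x.filter p, (r : ZMod n) * 1) : LL n) * (∅, (r : ZMod n) * -1) *
      (x.filter (¬p ·), (r : ZMod n) * -1) * (∅, (r : ZMod n) * 1) = (x, 0) := by
    simp only [mul_def, image_empty, sub_zero, image_id', mul_one, mul_neg, add_neg_cancel,
      zero_add, neg_add_cancel]
    simp only [← bot_eq_empty, symmDiff_bot]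
    rw [(disjoint_filter_filter_not x x p).symmDiff_eq_sup, sup_eq_union,
      filter_union_filter_not_eq]
  have hword := (((hasWordLE_sweep step_mem_gensSymm r hP).mul
    (hasWordLE_walk step_neg_mem_gensSymm r)).mul
    (hasWordLE_sweep step_neg_mem_gensSymm r hN)).mul (hasWordLE_walk step_mem_gensSymm r)
  exact (hsplit ▸ hword).mono (by omega)

theorem hasWordLE_of_lampM (x : Finset (ZMod n)) (j : ZMod n) :
    HasWordLE (gensSymm n) ((x, j) : LL n) (cycDist n 0 j + 6 * lampM n x) := by
  have hxj : ((x, 0) : LL n) * (∅, j) = (x, j) := Prod.ext (symmDiff_bot x) (zero_add j)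
  rw [add_comm, ← hxj]
  exact (hasWordLE_lamps x).mul (hasWordLE_position j)

theorem lampRho_le (x : Finset (ZMod n)) (j : ZMod n) :
    lampRho n (x, j) (∅, 0) ≤ cycDist n 0 j + 6 * lampM n x :=
  wordDist_one_le (fun _ => inv_mem_gensSymm) (hasWordLE_of_lampM x j)

theorem extent_le_lampRho (x : Finset (ZMod n)) (j : ZMod n) :
    extent ((x, j) : LL n) ≤ lampRho n (x, j) (∅, 0) :=
  extent_le_of_hasWordLE (hasWordLE_wordDist_one (fun _ => inv_mem_gensSymm)
    (hasWordLE_of_lampM x j))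

end LL

/-- Universal two-sided comparison of the lamplighter word metric with
`d_{Cₙ}(0, j) + M(x)`. -/
theorem lamplighter_word_metric_approx :
    ∃ c C : ℝ, 0 < c ∧ 0 < C ∧
      ∀ n : ℕ, 1 ≤ n → ∀ (x : Finset (ZMod n)) (j : ZMod n),
        c * ((cycDist n 0 j : ℝ) + (lampM n x : ℝ)) ≤
            (lampRho n (x, j) ((∅ : Finset (ZMod n)), (0 : ZMod n)) : ℝ) ∧
          (lampRho n (x, j) ((∅ : Finset (ZMod n)), (0 : ZMod n)) : ℝ) ≤
            C * ((cycDist n 0 j : ℝ) + (lampM n x : ℝ)) := by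
  refine ⟨1 / 2, 6, by norm_num, by norm_num, fun n _ x j => ?_⟩
  obtain ⟨hj, hx⟩ := max_le_iff.mp (LL.extent_le_lampRho x j)
  have hup := LL.lampRho_le x j
  rify at hj hx hup
  constructor <;> linarith [(cycDist n 0 j).cast_nonneg (α := ℝ)]
end

section
/- There exists a universal constant c > 0 such that for every n ≥ 3 and every j ∈ ZMod n: Σ_{I ∈ 𝓘} Σ_{A ⊆ I} Σ_{k ∈ ZMod n} (v^I_{k+j} − v^I_k)² ≥ c·d_{Cₙ}(0, j)². -/
open Finset

/-- The arc `{a, a+1, …, a + (⌊n/3⌋ - 1)}` of length `m = ⌊n/3⌋` in `ZMod n`.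
As `a` ranges over `ZMod n` this produces the family `𝓘` of all `n` such arcs. -/
def arc (n : ℕ) (a : ZMod n) : Finset (ZMod n) :=
  (Finset.range (n / 3)).image (fun i : ℕ => a + (i : ZMod n))

/-- distance from a point `k` to the arc starting at `a`: `min_{i ∈ I} d_{Cₙ}(k, i)`. -/
noncomputable def dArc (n : ℕ) (a k : ZMod n) : ℕ :=
  sInf {m : ℕ | ∃ i ∈ arc n a, cycDist n k i = m}

/-- `η = 1 / (n · 2^{n/6})`. -/
noncomputable def eta (n : ℕ) : ℝ := 1 / ((n : ℝ) * (2 : ℝ) ^ ((n : ℝ) / 6))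

/-- `δ = 1 / (√n · 2^{n/6})`. -/
noncomputable def dlt (n : ℕ) : ℝ := 1 / (Real.sqrt n * (2 : ℝ) ^ ((n : ℝ) / 6))

/-- The vector `v^I` attached to the arc `I` starting at `a`:
`v^I_k = η` for `k ∈ I` and `v^I_k = δ·√(d(k, I))` for `k ∉ I`. -/
noncomputable def vI (n : ℕ) (a k : ZMod n) : ℝ :=
  if k ∈ arc n a then eta n else dlt n * Real.sqrt (dArc n a k)

/-! Translating an arc translates `v^I`, so all arcs contribute equally and the left-hand side
is `n · 2^m · Q(j)`, where `Q(j) = ∑ₖ (v_{k+j} - v_k)²` for the arc `I₀ = {0, …, m-1}`.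
As `Q(-j) = Q(j)`, we may take `j = d = d(0, j) ≤ n/2`. The `⌈d/2⌉` rightmost points `k` of `I₀`
are moved by `k ↦ k + d` to points at distance `D ≥ d/3` from `I₀`, and
`(δ√D - η)² ≥ δ²D/2 - η² ≥ δ²D/6` since `η = δ/√n`; hence `Q(d) ≥ δ²d²/36`.
Finally `n · 2^m · δ² = 2^(m - n/3) ≥ 1/2`, so `c = 1/72` works. -/

lemma natCast_injOn_Iio (n : ℕ) : Set.InjOn (Nat.cast : ℕ → ZMod n) (Set.Iio n) := by
  intro a ha b hb h
  rw [ZMod.natCast_eq_natCast_iff'] at h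
  rwa [Nat.mod_eq_of_lt ha, Nat.mod_eq_of_lt hb] at h

lemma cycDist_eq_natAbs_valMinAbs (n : ℕ) [NeZero n] (x y : ZMod n) :
    cycDist n x y = (x - y).valMinAbs.natAbs := by
  refine le_antisymm (Nat.sInf_le ⟨_, rfl, ZMod.coe_valMinAbs _⟩)
    (le_csInf ⟨_, _, rfl, ZMod.coe_valMinAbs _⟩ ?_)
  rintro _ ⟨a, rfl, ha⟩
  exact ZMod.natAbs_min_of_le_div_two n _ a (by rw [ZMod.coe_valMinAbs, ha])
    (ZMod.natAbs_valMinAbs_le _)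

lemma cycDist_add_right (n : ℕ) (x y c : ZMod n) : cycDist n (x + c) (y + c) = cycDist n x y := by
  simp only [cycDist, add_sub_add_right_eq_sub]

lemma cycDist_natCast (n : ℕ) [NeZero n] {p i : ℕ} (hip : i ≤ p) (hpn : p < n) :
    cycDist n p i = min (p - i) (n - (p - i)) := by
  rw [cycDist_eq_natAbs_valMinAbs, ZMod.valMinAbs_natAbs_eq_min, ← Nat.cast_sub hip,
    ZMod.val_cast_of_lt (by omega)]

lemma two_mul_cycDist_le (n : ℕ) [NeZero n] (x y : ZMod n) : 2 * cycDist n x y ≤ n := by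
  have := ZMod.natAbs_valMinAbs_le (x - y)
  rw [cycDist_eq_natAbs_valMinAbs]
  omega

lemma natCast_cycDist_zero_eq_or (n : ℕ) [NeZero n] (j : ZMod n) :
    (cycDist n 0 j : ZMod n) = j ∨ (cycDist n 0 j : ZMod n) = -j := by
  rw [cycDist_eq_natAbs_valMinAbs, zero_sub, ZMod.natCast_natAbs_valMinAbs]
  split_ifs <;> simp

lemma mem_arc_add_right (n : ℕ) (a x : ZMod n) : x + a ∈ arc n a ↔ x ∈ arc n 0 := by
  simp [arc, add_comm a]

lemma dArc_add_right (n : ℕ) (a x : ZMod n) : dArc n a (x + a) = dArc n 0 x := by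
  unfold dArc
  congr 1
  ext m
  constructor
  · rintro ⟨i, hi, rfl⟩
    refine ⟨i - a, ?_, ?_⟩
    · rwa [← mem_arc_add_right, sub_add_cancel]
    · rw [← cycDist_add_right n x (i - a) a, sub_add_cancel]
  · rintro ⟨i, hi, rfl⟩
    exact ⟨i + a, (mem_arc_add_right n a i).2 hi, cycDist_add_right n x i a⟩

lemma vI_add_right (n : ℕ) (a x : ZMod n) : vI n a (x + a) = vI n 0 x := by
  simp only [vI, mem_arc_add_right, dArc_add_right]

lemma card_arc (n : ℕ) (a : ZMod n) : (arc n a).card = n / 3 := by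
  rw [arc, card_image_of_injOn, card_range]
  intro i hi k hk h
  simp only [coe_range, Set.mem_Iio] at hi hk
  exact natCast_injOn_Iio n (Set.mem_Iio.2 (by omega)) (Set.mem_Iio.2 (by omega))
    (add_left_cancel h)

lemma natCast_mem_arc_zero {n t : ℕ} (ht : t < n / 3) : (t : ZMod n) ∈ arc n 0 :=
  mem_image.2 ⟨t, mem_range.2 ht, zero_add _⟩

lemma natCast_notMem_arc_zero {n p : ℕ} (hp : n / 3 ≤ p) (hpn : p < n) :
    (p : ZMod n) ∉ arc n 0 := by
  simp only [arc, zero_add, mem_image, mem_range, not_exists, not_and]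
  intro i hi h
  have := natCast_injOn_Iio n (Set.mem_Iio.2 (by omega)) (Set.mem_Iio.2 hpn) h
  omega

lemma le_dArc_zero_natCast {n p : ℕ} [NeZero n] (hn : 3 ≤ n) (hp : n / 3 ≤ p) (hpn : p < n) :
    min (p + 1 - n / 3) (n - p) ≤ dArc n 0 p := by
  refine le_csInf ⟨_, _, natCast_mem_arc_zero (t := 0) (by omega), rfl⟩ ?_
  rintro _ ⟨_, hmem, rfl⟩
  obtain ⟨i, hi, rfl⟩ := mem_image.1 hmem
  rw [mem_range] at hi
  rw [zero_add, cycDist_natCast n (by omega) hpn]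
  omega

lemma vI_zero_natCast_of_lt {n t : ℕ} (ht : t < n / 3) : vI n 0 t = eta n :=
  if_pos (natCast_mem_arc_zero ht)

lemma dlt_nonneg (n : ℕ) : 0 ≤ dlt n := by
  unfold dlt
  positivity

lemma dlt_mul_sqrt_le_vI_zero_natCast {n p : ℕ} [NeZero n] (hn : 3 ≤ n) (hp : n / 3 ≤ p)
    (hpn : p < n) : dlt n * √(min (p + 1 - n / 3) (n - p) : ℕ) ≤ vI n 0 p := by
  rw [vI, if_neg (natCast_notMem_arc_zero hp hpn)]
  gcongr
  · exact dlt_nonneg n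
  · exact_mod_cast le_dArc_zero_natCast hn hp hpn

lemma eta_eq_dlt_div_sqrt (n : ℕ) : eta n = dlt n / √n := by
  rw [eta, dlt, div_div, mul_right_comm, Real.mul_self_sqrt n.cast_nonneg]

lemma dlt_sq (n : ℕ) : dlt n ^ 2 = 1 / (n * 2 ^ ((n : ℝ) / 3)) := by
  rw [dlt, div_pow, mul_pow, Real.sq_sqrt n.cast_nonneg, ← Real.rpow_mul_natCast zero_le_two]
  ring_nf

lemma one_half_le_mul_two_pow_mul_dlt_sq {n : ℕ} (hn : 0 < n) :
    1 / 2 ≤ n * 2 ^ (n / 3) * dlt n ^ 2 := by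
  have hpow : (2 : ℝ) ^ ((n : ℝ) / 3) ≤ 2 * 2 ^ (n / 3) := by
    rw [← pow_succ', ← Real.rpow_natCast]
    have : n < 3 * (n / 3 + 1) := by omega
    have : (n : ℝ) < 3 * ((n / 3 : ℕ) + 1) := by exact_mod_cast this
    exact Real.rpow_le_rpow_of_exponent_le one_le_two (by push_cast; linarith)
  have hn' : (0 : ℝ) < n := by exact_mod_cast hn
  rw [dlt_sq, mul_one_div, le_div_iff₀ (by positivity)]
  nlinarith

lemma dlt_sq_mul_div_six_le_sq_sub_eta {n : ℕ} (hn : 3 ≤ n) {D x : ℝ} (hD : 1 ≤ D)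
    (hx : dlt n * √D ≤ x) : dlt n ^ 2 * D / 6 ≤ (x - eta n) ^ 2 := by
  have hn' : (3 : ℝ) ≤ n := by exact_mod_cast hn
  have hδ := dlt_nonneg n
  have hsqrtD : 1 ≤ √D := Real.one_le_sqrt.2 hD
  have hsqrtn : 1 ≤ √(n : ℝ) := Real.one_le_sqrt.2 (by linarith)
  have hη : eta n ^ 2 * n = dlt n ^ 2 := by
    rw [eta_eq_dlt_div_sqrt, div_pow, Real.sq_sqrt n.cast_nonneg]
    field_simp
  have hη_nonneg : 0 ≤ eta n := by
    rw [eta_eq_dlt_div_sqrt]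
    positivity
  have hη_le : eta n ≤ dlt n * √D := by
    rw [eta_eq_dlt_div_sqrt]
    calc dlt n / √n ≤ dlt n := div_le_self hδ hsqrtn
      _ ≤ dlt n * √D := le_mul_of_one_le_right hδ hsqrtD
  -- `(y - η)² ≥ y²/2 - η²` with `y = δ√D`, and `η² ≤ δ²/3 ≤ δ²D/3`
  have hsq : (dlt n * √D) ^ 2 = dlt n ^ 2 * D := by rw [mul_pow, Real.sq_sqrt (by linarith)]
  nlinarith [sq_nonneg (dlt n * √D - 2 * eta n), mul_le_mul_of_nonneg_left hD (sq_nonneg (dlt n)),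
    mul_le_mul_of_nonneg_left hn' (sq_nonneg (eta n))]

section ShiftSqSum

variable {G : Type*} [AddCommGroup G] [Fintype G]

def shiftSqSum (f : G → ℝ) (j : G) : ℝ := ∑ k, (f (k + j) - f k) ^ 2

lemma shiftSqSum_neg (f : G → ℝ) (j : G) : shiftSqSum f (-j) = shiftSqSum f j := by
  refine (Equiv.sum_comp (Equiv.addRight j) _).symm.trans (sum_congr rfl fun k _ => ?_)
  simp only [Equiv.coe_addRight, add_neg_cancel_right]
  ring

lemma shiftSqSum_comp_add_right (f : G → ℝ) (a j : G) :
    shiftSqSum (fun k => f (k + a)) j = shiftSqSum f j := by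
  simp only [shiftSqSum, add_right_comm _ j a]
  exact Equiv.sum_comp (Equiv.addRight a) fun k => (f (k + j) - f k) ^ 2

end ShiftSqSum

lemma dlt_sq_mul_sq_div_le_shiftSqSum {n : ℕ} [NeZero n] (hn : 3 ≤ n) {d : ℕ}
    (hd : 2 * d ≤ n) :
    dlt n ^ 2 * d ^ 2 / 36 ≤ shiftSqSum (vI n 0) (d : ZMod n) := by
  -- the `⌈d/2⌉` rightmost points of the arc `{0, …, n/3 - 1}`
  set T := Ico (n / 3 - (d - d / 2)) (n / 3) with hT
  have hterm : ∀ t ∈ T, dlt n ^ 2 * d / 18 ≤ (vI n 0 (t + d) - vI n 0 t) ^ 2 := by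
    intro t ht
    rw [mem_Ico] at ht
    set D := min (t + d + 1 - n / 3) (n - (t + d))
    have hD : 1 ≤ D ∧ d ≤ 3 * D := by omega
    have hD' : (1 : ℝ) ≤ D ∧ (d : ℝ) ≤ 3 * D := by exact_mod_cast hD
    rw [vI_zero_natCast_of_lt ht.2, ← Nat.cast_add]
    refine le_trans ?_ (dlt_sq_mul_div_six_le_sq_sub_eta hn hD'.1
      (dlt_mul_sqrt_le_vI_zero_natCast hn (by omega) (by omega)))
    nlinarith [sq_nonneg (dlt n)]
  have hinj : Set.InjOn (Nat.cast : ℕ → ZMod n) T := (natCast_injOn_Iio n).mono fun t ht => by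
    rw [mem_coe, mem_Ico] at ht
    exact Set.mem_Iio.2 (by omega)
  have hcard : (d : ℝ) ≤ 2 * T.card := by
    have : d ≤ 2 * T.card := by simp only [hT, Nat.card_Ico]; omega
    exact_mod_cast this
  calc dlt n ^ 2 * d ^ 2 / 36
      ≤ T.card * (dlt n ^ 2 * d / 18) := by
        nlinarith [mul_le_mul_of_nonneg_right hcard (mul_nonneg (sq_nonneg (dlt n)) d.cast_nonneg)]
    _ ≤ ∑ t ∈ T, (vI n 0 (t + d) - vI n 0 t) ^ 2 := by
      simpa using card_nsmul_le_sum T _ _ hterm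
    _ = ∑ k ∈ T.image Nat.cast, (vI n 0 (k + d) - vI n 0 k) ^ 2 :=
      (sum_image (f := fun k => (vI n 0 (k + d) - vI n 0 k) ^ 2) hinj).symm
    _ ≤ shiftSqSum (vI n 0) (d : ZMod n) :=
      sum_le_univ_sum_of_nonneg fun _ => sq_nonneg _

/-- For every `j`,
`Σ_{I ∈ 𝓘} Σ_{A ⊆ I} Σ_{k ∈ ZMod n} (v^I_{k+j} - v^I_k)² ≥ c·d_{Cₙ}(0,j)²`. -/
theorem sum_vI_shift_sq_ge :
    ∃ c : ℝ, 0 < c ∧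
      ∀ (n : ℕ) [NeZero n], 3 ≤ n → ∀ j : ZMod n,
        c * (cycDist n 0 j : ℝ) ^ 2 ≤
          ∑ a : ZMod n, ∑ _A ∈ (arc n a).powerset, ∑ k : ZMod n,
            (vI n a (k + j) - vI n a k) ^ 2 := by
  refine ⟨1 / 72, by norm_num, fun n _ hn j => ?_⟩
  set d := cycDist n 0 j
  have harc : ∀ a : ZMod n, ∑ k : ZMod n, (vI n a (k + j) - vI n a k) ^ 2 =
      shiftSqSum (vI n 0) (d : ZMod n) := by
    intro a
    calc _ = shiftSqSum (fun k => vI n a (k + a)) j := (shiftSqSum_comp_add_right _ a j).symm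
      _ = shiftSqSum (vI n 0) j := by simp only [vI_add_right]
      _ = shiftSqSum (vI n 0) (d : ZMod n) := by
        rcases natCast_cycDist_zero_eq_or n j with h | h <;> rw [h]
        rw [shiftSqSum_neg]
  simp only [harc, sum_const, card_powerset, card_arc, card_univ, ZMod.card, nsmul_eq_mul]
  push_cast
  have hcoeff := one_half_le_mul_two_pow_mul_dlt_sq (n := n) (by omega)
  have hQ := dlt_sq_mul_sq_div_le_shiftSqSum hn (two_mul_cycDist_le n 0 j)
  calc 1 / 72 * (d : ℝ) ^ 2 = 1 / 2 * (d ^ 2 / 36) := by ring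
    _ ≤ (n * 2 ^ (n / 3) * dlt n ^ 2) * (d ^ 2 / 36) := by gcongr
    _ = n * (2 ^ (n / 3) * (dlt n ^ 2 * d ^ 2 / 36)) := by ring
    _ ≤ n * (2 ^ (n / 3) * shiftSqSum (vI n 0) (d : ZMod n)) := by gcongr
end

section
/- Let G be a finite group and ρ a left-invariant metric on G (i.e. ρ(z·x, z·y) = ρ(x, y) for all x, y, z ∈ G). Suppose H₀ is a complex inner product space, f : G → H₀, and A, B > 0 satisfy (1/B)·‖f(x) − f(y)‖ ≤ ρ(x, y) ≤ A·‖f(x) − f(y)‖ for all x, y ∈ G. Then there exist a finite-dimensional complex inner product space H, a group homomorphism β from G into the group of unitary (linear isometric) automorphisms of H, and a vector v ∈ H such that the map g(x) := β(x)v satisfies (1/B)·‖g(x) − g(y)‖ ≤ ρ(x, y) ≤ A·‖g(x) − g(y)‖ for all x, y ∈ G. -/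
/-!
Average `f` over left translations. In `ℓ²(G, span (range f))` put `v z = f z⁻¹ / √|G|` and let
`G` act by the left regular representation; then `‖β x v - β y v‖` is the root mean square of
the numbers `‖f (z⁻¹ * x) - f (z⁻¹ * y)‖`, each of which satisfies the two bounds for `ρ x y`
by left invariance of `ρ`. Those bounds cut out an interval of `ℝ`, and a root mean square lies
between the smallest and largest of its entries.
-/

open Finset Submodule

namespace LinearIsometryEquiv

variable {𝕜 E F : Type*} [Semiring 𝕜] [SeminormedAddCommGroup E] [SeminormedAddCommGroup F]
  [Module 𝕜 E] [Module 𝕜 F]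

def conj (e : E ≃ₗᵢ[𝕜] F) : (E ≃ₗᵢ[𝕜] E) ≃* (F ≃ₗᵢ[𝕜] F) where
  toFun u := (e.symm.trans u).trans e
  invFun u := (e.trans u).trans e.symm
  left_inv u := by ext; simp
  right_inv u := by ext; simp
  map_mul' u v := by ext; simp

@[simp]
theorem conj_apply_apply (e : E ≃ₗᵢ[𝕜] F) (u : E ≃ₗᵢ[𝕜] E) (x : E) :
    e.conj u (e x) = e (u x) := by
  simp [conj]

variable (𝕜 E) (G : Type*) [Group G] [Fintype G]

noncomputable def leftRegular : G →* ((PiLp 2 fun _ : G => E) ≃ₗᵢ[𝕜] PiLp 2 fun _ : G => E) where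
  toFun x := piLpCongrLeft 2 𝕜 E (MulAction.toPerm x)
  map_one' := by ext; simp
  map_mul' x y := by ext; simp [mul_assoc]

variable {𝕜 E G}

@[simp]
theorem leftRegular_apply_apply (x : G) (u : PiLp 2 fun _ : G => E) (z : G) :
    leftRegular 𝕜 E G x u z = u (x⁻¹ * z) := rfl

end LinearIsometryEquiv

section RootMeanSquare

variable {ι E : Type*} [Fintype ι] [SeminormedAddCommGroup E] [NormedSpace ℝ E]

theorem norm_inv_sqrt_card_smul_toLp_sq (u : ι → E) :
    ‖(√(Fintype.card ι))⁻¹ • WithLp.toLp 2 u‖ ^ 2 = (∑ i, ‖u i‖ ^ 2) / Fintype.card ι := by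
  rw [norm_smul, mul_pow, PiLp.norm_sq_eq_of_L2, norm_inv, Real.norm_eq_abs,
    abs_of_nonneg (Real.sqrt_nonneg _), inv_pow, Real.sq_sqrt (Nat.cast_nonneg _)]
  simp [div_eq_inv_mul]

theorem norm_inv_sqrt_card_smul_toLp_mem_of_ordConnected [Nonempty ι] {s : Set ℝ}
    [s.OrdConnected] (u : ι → E) (hu : ∀ i, ‖u i‖ ∈ s) :
    ‖(√(Fintype.card ι))⁻¹ • WithLp.toLp 2 u‖ ∈ s := by
  set r := ‖(√(Fintype.card ι))⁻¹ • WithLp.toLp 2 u‖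
  have hsum : ∑ i, ‖u i‖ ^ 2 = ∑ _i : ι, r ^ 2 := by
    rw [norm_inv_sqrt_card_smul_toLp_sq, sum_const, card_univ, nsmul_eq_mul, mul_div_cancel₀]
    exact Nat.cast_ne_zero.2 Fintype.card_ne_zero
  obtain ⟨i, -, hi⟩ := exists_le_of_sum_le univ_nonempty hsum.le
  obtain ⟨j, -, hj⟩ := exists_le_of_sum_le univ_nonempty hsum.ge
  exact Set.OrdConnected.out ‹_› (hu i) (hu j)
    ⟨(sq_le_sq₀ (norm_nonneg _) (norm_nonneg _)).1 hi,
      (sq_le_sq₀ (norm_nonneg _) (norm_nonneg _)).1 hj⟩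

end RootMeanSquare

theorem Real.ordConnected_setOf_mul_le (a r : ℝ) : {t : ℝ | a * t ≤ r}.OrdConnected :=
  (convex_halfSpace_le (LinearMap.mulLeft ℝ a).isLinear r).ordConnected

theorem Real.ordConnected_setOf_le_mul (a r : ℝ) : {t : ℝ | r ≤ a * t}.OrdConnected :=
  (convex_halfSpace_ge (LinearMap.mulLeft ℝ a).isLinear r).ordConnected

theorem equivariant_embeddings_suffice_general {G : Type*} [Group G] [Fintype G]
    {H₀ : Type*} [NormedAddCommGroup H₀] [InnerProductSpace ℂ H₀]
    (ρ : G → G → ℝ)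
    (hinv : ∀ x y z : G, ρ (z * x) (z * y) = ρ x y)
    (f : G → H₀) (A B : ℝ)
    (hf : ∀ x y : G, (1 / B) * ‖f x - f y‖ ≤ ρ x y ∧ ρ x y ≤ A * ‖f x - f y‖) :
    ∃ (d : ℕ) (β : G →* (EuclideanSpace ℂ (Fin d) ≃ₗᵢ[ℂ] EuclideanSpace ℂ (Fin d)))
      (v : EuclideanSpace ℂ (Fin d)),
      ∀ x y : G,
        (1 / B) * ‖β x v - β y v‖ ≤ ρ x y ∧ ρ x y ≤ A * ‖β x v - β y v‖ := by
  let W := span ℂ (Set.range f)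
  have : FiniteDimensional ℂ W := .span_of_finite ℂ (Set.finite_range f)
  let f' : G → W := fun x => ⟨f x, subset_span (Set.mem_range_self x)⟩
  let reg := LinearIsometryEquiv.leftRegular ℂ W G
  let e := (stdOrthonormalBasis ℂ (PiLp 2 fun _ : G => W)).repr
  let v := (√(Fintype.card G))⁻¹ • WithLp.toLp 2 fun z => f' z⁻¹
  refine ⟨_, e.conj.toMonoidHom.comp reg, e v, fun x y => ?_⟩
  have hdiff : reg x v - reg y v =
      (√(Fintype.card G))⁻¹ • WithLp.toLp 2 fun z => f' (z⁻¹ * x) - f' (z⁻¹ * y) := by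
    ext z; simp [v, reg, smul_sub]
  simp only [MonoidHom.comp_apply, MulEquiv.coe_toMonoidHom, LinearIsometryEquiv.conj_apply_apply,
    ← map_sub, LinearIsometryEquiv.norm_map, hdiff]
  have := Real.ordConnected_setOf_mul_le (1 / B) (ρ x y)
  have := Real.ordConnected_setOf_le_mul A (ρ x y)
  refine norm_inv_sqrt_card_smul_toLp_mem_of_ordConnected
    (s := {t | 1 / B * t ≤ ρ x y} ∩ {t | ρ x y ≤ A * t}) _ fun z => ?_
  simpa [hinv] using hf (z⁻¹ * x) (z⁻¹ * y)

/-- If a finite group `G` with a left-invariant metric `ρ` admits a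
bi-Lipschitz map into a complex inner product space with constants `A, B`, then there is
an *equivariant* embedding `x ↦ β(x)v` (for a unitary representation `β` on a
finite-dimensional complex inner product space and a vector `v`) with the same constants. -/
theorem equivariant_embeddings_suffice {G : Type*} [Group G] [Fintype G]
    {H₀ : Type*} [NormedAddCommGroup H₀] [InnerProductSpace ℂ H₀]
    (ρ : G → G → ℝ)
    (hsymm : ∀ x y, ρ x y = ρ y x)
    (htri : ∀ x y z, ρ x z ≤ ρ x y + ρ y z)
    (heq : ∀ x y, ρ x y = 0 ↔ x = y)
    (hinv : ∀ x y z : G, ρ (z * x) (z * y) = ρ x y)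
    (f : G → H₀) (A B : ℝ) (hA : 0 < A) (hB : 0 < B)
    (hf : ∀ x y : G, (1 / B) * ‖f x - f y‖ ≤ ρ x y ∧ ρ x y ≤ A * ‖f x - f y‖) :
    ∃ (d : ℕ) (β : G →* (EuclideanSpace ℂ (Fin d) ≃ₗᵢ[ℂ] EuclideanSpace ℂ (Fin d)))
      (v : EuclideanSpace ℂ (Fin d)),
      ∀ x y : G,
        (1 / B) * ‖β x v - β y v‖ ≤ ρ x y ∧ ρ x y ≤ A * ‖β x v - β y v‖ :=
  equivariant_embeddings_suffice_general ρ hinv f A B hf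
end

section
/- Let G be a finite group and β a homomorphism from G into the group of unitary automorphisms of a complex inner product space H, such that the only vector w ∈ H with β(x)w = w for all x ∈ G is w = 0. Then for every v ∈ H: Σ_{x ∈ G} ‖β(x)v − v‖² = 2·|G|·‖v‖². -/
/-! Expanding the square, `‖β x v - v‖² = 2‖v‖² - 2 Re ⟪β x v, v⟫`, so the sum equals
`2|G|‖v‖² - 2 Re ⟪∑ x, β x v, v⟫`. The orbit sum `∑ x, β x v` is fixed by every `β y`,
hence vanishes. -/

open Finset

section

variable {G : Type*} [Group G] [Fintype G]

theorem apply_sum_apply_eq_sum_apply {R E : Type*} [Semiring R] [SeminormedAddCommGroup E]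
    [Module R E] (β : G →* (E ≃ₗᵢ[R] E)) (v : E) (y : G) :
    β y (∑ x : G, β x v) = ∑ x : G, β x v := by
  rw [map_sum]
  exact Fintype.sum_equiv (Equiv.mulLeft y) _ _ fun x => by simp [map_mul]

theorem norm_sub_sq_of_norm_eq {𝕜 E : Type*} [RCLike 𝕜] [SeminormedAddCommGroup E]
    [InnerProductSpace 𝕜 E] {u v : E} (h : ‖u‖ = ‖v‖) :
    ‖u - v‖ ^ 2 = 2 * ‖v‖ ^ 2 - 2 * RCLike.re (inner 𝕜 u v) := by
  rw [@norm_sub_sq 𝕜, h]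
  ring

theorem sum_norm_apply_sub_sq {𝕜 E : Type*} [RCLike 𝕜] [SeminormedAddCommGroup E]
    [InnerProductSpace 𝕜 E] (β : G →* (E ≃ₗᵢ[𝕜] E)) (v : E) :
    ∑ x : G, ‖β x v - v‖ ^ 2
      = 2 * (Fintype.card G : ℝ) * ‖v‖ ^ 2 - 2 * RCLike.re (inner 𝕜 (∑ x : G, β x v) v) := by
  simp only [norm_sub_sq_of_norm_eq (𝕜 := 𝕜) ((β _).norm_map v), sum_inner, map_sum,
    sum_sub_distrib, sum_const, card_univ, nsmul_eq_mul, mul_sum]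
  ring

end

/-- If `β` is a unitary representation of a finite group `G` on a complex
inner product space `H` whose only global fixed vector is `0`, then for every `v ∈ H`,
`Σ_{x ∈ G} ‖β(x)v - v‖² = 2·|G|·‖v‖²`. -/
theorem sum_norm_sq_of_no_fixed_vector {G : Type*} [Group G] [Fintype G]
    {H : Type*} [NormedAddCommGroup H] [InnerProductSpace ℂ H]
    (β : G →* (H ≃ₗᵢ[ℂ] H))
    (hfix : ∀ w : H, (∀ x : G, β x w = w) → w = 0)
    (v : H) :
    ∑ x : G, ‖β x v - v‖ ^ 2 = 2 * (Fintype.card G : ℝ) * ‖v‖ ^ 2 := by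
  have horbit : ∑ x : G, β x v = 0 := hfix _ (apply_sum_apply_eq_sum_apply β v)
  rw [sum_norm_apply_sub_sq, horbit, inner_zero_left, map_zero, mul_zero, sub_zero]
end

section
/- Let G be a finite Abelian (additive) group, ρ an invariant metric on G (ρ(z + x, z + y) = ρ(x, y) for all x, y, z), and D ≥ 1. Suppose there exist a complex inner product space H and a map f : G → H with √(ρ(x, y)) ≤ ‖f(x) − f(y)‖ ≤ D·√(ρ(x, y)) for all x, y ∈ G. Then there exist nonnegative reals (a_χ), indexed by the characters χ of G, such that for all x, y ∈ G: Σ_χ a_χ·|χ(x) − χ(y)|² ≤ ρ(x, y) ≤ D²·Σ_χ a_χ·|χ(x) − χ(y)|². -/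
/-!
Let `v χ = ∑ z, χ z • f z` be the Fourier coefficients of `f`. Translating `f` by `x` multiplies
`v χ` by `χ (-x)`, so Plancherel for `H`-valued functions gives
`∑ χ, ‖v χ‖² |χ x - χ y|² = |G| ∑ z, ‖f (z + x) - f (z + y)‖²`.
By invariance of `ρ` each term on the right lies between `ρ x y` and `D² ρ x y`, hence
`a χ = ‖v χ‖² / (|G|² D²)` works.
-/

open Finset ComplexConjugate

namespace AddChar

variable {G : Type*} [AddCommGroup G] [Fintype G]

lemma sum_conj_mul_eq_ite [DecidableEq G] (z u : G) :
    ∑ χ : AddChar G ℂ, conj (χ z) * χ u = if z = u then (Fintype.card G : ℂ) else 0 := by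
  simp_rw [← map_neg_eq_conj, ← map_add_eq_mul, sum_apply_eq_ite, neg_add_eq_zero]

variable {E : Type*} [NormedAddCommGroup E] [InnerProductSpace ℂ E]

lemma sum_norm_sum_smul_sq (g : G → E) :
    ∑ χ : AddChar G ℂ, ‖∑ z, χ z • g z‖ ^ 2 = Fintype.card G * ∑ z, ‖g z‖ ^ 2 := by
  classical
  have norm_sq_eq_inner (v : E) : ((‖v‖ ^ 2 : ℝ) : ℂ) = inner ℂ v v := by
    simp [inner_self_eq_norm_sq_to_K]
  apply Complex.ofReal_injective
  simp_rw [Complex.ofReal_sum, Complex.ofReal_mul, Complex.ofReal_sum, norm_sq_eq_inner,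
    Complex.ofReal_natCast]
  calc ∑ χ : AddChar G ℂ, inner ℂ (∑ z, χ z • g z) (∑ z, χ z • g z)
      = ∑ χ : AddChar G ℂ, ∑ z, ∑ u, conj (χ z) * χ u * inner ℂ (g z) (g u) := by
        simp_rw [sum_inner, inner_sum, inner_smul_left, inner_smul_right, mul_assoc]
    _ = ∑ z, ∑ u, (∑ χ : AddChar G ℂ, conj (χ z) * χ u) * inner ℂ (g z) (g u) := by
        simp_rw [sum_mul]
        rw [sum_comm]
        exact sum_congr rfl fun z _ => sum_comm
    _ = Fintype.card G * ∑ z, inner ℂ (g z) (g z) := by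
        simp [sum_conj_mul_eq_ite, mul_sum]

lemma sum_smul_sub_translate (χ : AddChar G ℂ) (g : G → E) (x y : G) :
    ∑ z, χ z • (g (z + x) - g (z + y)) = (χ (-x) - χ (-y)) • ∑ z, χ z • g z := by
  have translate (w : G) : ∑ z, χ z • g (z + w) = χ (-w) • ∑ z, χ z • g z := by
    calc ∑ z, χ z • g (z + w) = ∑ z, χ (z + w - w) • g (z + w) := by simp
      _ = ∑ z, χ (z - w) • g z := Equiv.sum_comp (Equiv.addRight w) (fun z => χ (z - w) • g z)
      _ = χ (-w) • ∑ z, χ z • g z := by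
        simp [smul_sum, smul_smul, sub_eq_neg_add, map_add_eq_mul]
  simp_rw [smul_sub, sum_sub_distrib, translate, sub_smul]

lemma norm_map_neg_sub_map_neg (χ : AddChar G ℂ) (x y : G) :
    ‖χ (-x) - χ (-y)‖ = ‖χ x - χ y‖ := by
  rw [map_neg_eq_conj, map_neg_eq_conj, ← map_sub, Complex.norm_conj]

lemma sum_norm_sum_smul_sq_mul_norm_sub_sq (g : G → E) (x y : G) :
    ∑ χ : AddChar G ℂ, ‖∑ z, χ z • g z‖ ^ 2 * ‖χ x - χ y‖ ^ 2
      = Fintype.card G * ∑ z, ‖g (z + x) - g (z + y)‖ ^ 2 := by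
  rw [← sum_norm_sum_smul_sq]
  refine sum_congr rfl fun χ _ => ?_
  rw [sum_smul_sub_translate, norm_smul, norm_map_neg_sub_map_neg]
  ring

end AddChar

lemma nonneg_of_symm_of_triangle {X : Type*} {ρ : X → X → ℝ} (hsymm : ∀ x y, ρ x y = ρ y x)
    (htri : ∀ x y z, ρ x z ≤ ρ x y + ρ y z) (hself : ∀ x, ρ x x = 0) (x y : X) :
    0 ≤ ρ x y := by
  have := htri x y x
  rw [hself, hsymm y x] at this
  linarith

lemma sq_bounds_of_sqrt_bounds {r t D : ℝ} (hr : 0 ≤ r) (hlow : √r ≤ t) (hup : t ≤ D * √r) :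
    r ≤ t ^ 2 ∧ t ^ 2 ≤ D ^ 2 * r := by
  have ht : 0 ≤ t := (Real.sqrt_nonneg r).trans hlow
  constructor
  · simpa [Real.sq_sqrt hr] using pow_le_pow_left₀ (Real.sqrt_nonneg r) hlow 2
  · simpa [mul_pow, Real.sq_sqrt hr] using pow_le_pow_left₀ ht hup 2

/-- If a finite Abelian group `G` with invariant metric `ρ` satisfies
`√ρ(x,y) ≤ ‖f x - f y‖ ≤ D·√ρ(x,y)` for some map `f` into a complex inner product space,
then there are nonnegative weights `a_χ` on the characters of `G` with
`Σ_χ a_χ·|χ(x) - χ(y)|² ≤ ρ(x,y) ≤ D²·Σ_χ a_χ·|χ(x) - χ(y)|²` for all `x, y`. -/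
theorem equivariant_character_decomposition {G : Type*} [AddCommGroup G] [Fintype G]
    (ρ : G → G → ℝ)
    (hsymm : ∀ x y, ρ x y = ρ y x)
    (htri : ∀ x y z, ρ x z ≤ ρ x y + ρ y z)
    (heq : ∀ x y, ρ x y = 0 ↔ x = y)
    (hinv : ∀ x y z : G, ρ (z + x) (z + y) = ρ x y)
    (D : ℝ) (hD : 1 ≤ D)
    {H : Type*} [NormedAddCommGroup H] [InnerProductSpace ℂ H]
    (f : G → H)
    (hf : ∀ x y : G, Real.sqrt (ρ x y) ≤ ‖f x - f y‖ ∧ ‖f x - f y‖ ≤ D * Real.sqrt (ρ x y)) :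
    ∃ a : AddChar G ℂ → ℝ, (∀ χ, 0 ≤ a χ) ∧
      ∀ x y : G,
        (∑ χ : AddChar G ℂ, a χ * ‖χ x - χ y‖ ^ 2) ≤ ρ x y ∧
          ρ x y ≤ D ^ 2 * ∑ χ : AddChar G ℂ, a χ * ‖χ x - χ y‖ ^ 2 := by
  have hρ := nonneg_of_symm_of_triangle hsymm htri fun x => (heq x x).mpr rfl
  have hn : (0 : ℝ) < Fintype.card G := by exact_mod_cast Fintype.card_pos
  have hD2 : (0 : ℝ) < D ^ 2 := by positivity
  have translate_bounds (x y z : G) :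
      ρ x y ≤ ‖f (z + x) - f (z + y)‖ ^ 2 ∧ ‖f (z + x) - f (z + y)‖ ^ 2 ≤ D ^ 2 * ρ x y := by
    rw [← hinv x y z]
    exact sq_bounds_of_sqrt_bounds (hρ _ _) (hf _ _).1 (hf _ _).2
  refine ⟨fun χ => ‖∑ z, χ z • f z‖ ^ 2 / ((Fintype.card G : ℝ) ^ 2 * D ^ 2),
    fun χ => by positivity, fun x y => ?_⟩
  have hsum : ∑ χ : AddChar G ℂ,
        ‖∑ z, χ z • f z‖ ^ 2 / ((Fintype.card G : ℝ) ^ 2 * D ^ 2) * ‖χ x - χ y‖ ^ 2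
      = (∑ z, ‖f (z + x) - f (z + y)‖ ^ 2) / (Fintype.card G * D ^ 2) := by
    simp_rw [div_mul_eq_mul_div, ← sum_div, AddChar.sum_norm_sum_smul_sq_mul_norm_sub_sq]
    field_simp
  set S := ∑ z, ‖f (z + x) - f (z + y)‖ ^ 2
  have hS_low : Fintype.card G * ρ x y ≤ S := by
    simpa using card_nsmul_le_sum univ _ _ fun z _ => (translate_bounds x y z).1
  have hS_up : S ≤ Fintype.card G * (D ^ 2 * ρ x y) := by
    simpa using sum_le_card_nsmul univ _ _ fun z _ => (translate_bounds x y z).2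
  rw [hsum, div_le_iff₀ (by positivity), mul_div_assoc', le_div_iff₀ (by positivity)]
  constructor <;> nlinarith
end

section
/- There is a universal constant C > 0 with the following property. Let G be a finite Abelian (additive) group, ρ an invariant metric on G, and m ≥ 2 an integer such that m·x = 0 for every x ∈ G. Suppose D ≥ 1 and there exist a complex inner product space H and f : G → H with √(ρ(x, y)) ≤ ‖f(x) − f(y)‖ ≤ D·√(ρ(x, y)) for all x, y. Then there exist nonnegative reals (a_χ), indexed by the characters χ of G, such that for all x, y ∈ G: ρ(x, y) ≤ 2·D²·Σ_χ a_χ·|χ(x) − χ(y)| ≤ C·D⁴·(log m)·ρ(x, y). In particular (G, ρ) embeds into a weighted ℓ₁ space over the characters with distortion at most C·D⁴·log m. -/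
/-!
Let `a χ = ‖f̂ χ‖² / |G|²` with `f̂ χ = ∑ z, conj (χ z) • f z`. Parseval applied to
`z ↦ f (z + t) - f z` shows that `∑ χ, a χ |χ t - 1|²` is the average of `‖f (z + t) - f z‖²`
over `z`, hence lies between `ρ(t, 0)` and `D² ρ(t, 0)`; as `|χ t - 1| ≤ 2`, this gives the lower
bound. For the upper bound, an `m`-th root of unity `z` satisfies
`|z - 1| ≤ (π / 2) ∑_{j < J} 2⁻ʲ |z^(2^j) - 1|²` once `m ≤ 2 ^ J`. Summed against `a`, the
`j`-th term is at most `2⁻ʲ D² ρ(2ʲ t, 0) ≤ D² ρ(t, 0)`, and `J ≈ log₂ m` scales suffice.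
-/

open Finset Real ComplexConjugate
open scoped InnerProductSpace BigOperators

/-- If `2 ^ j * α` lands in `(π / 4, π / 2]`, the `j`-th term alone dominates `α`, since there
`sin ^ 2 ≥ 1 / 2` and `α ≤ 2⁻ʲ π / 2`; otherwise double `α` and recurse. -/
lemma le_pi_mul_sum_sin_sq {α : ℝ} {J : ℕ} (hα : α ≤ π / 2) (hJ : π / 2 < 2 ^ J * α) :
    α ≤ π * ∑ j ∈ range J, sin (2 ^ j * α) ^ 2 / 2 ^ j := by
  induction J generalizing α with
  | zero =>
    rw [pow_zero, one_mul] at hJ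
    linarith
  | succ J ih =>
    rw [sum_range_succ']
    by_cases hlarge : π / 4 < α
    · have hrest : 0 ≤ ∑ j ∈ range J, sin (2 ^ (j + 1) * α) ^ 2 / 2 ^ (j + 1) :=
        sum_nonneg fun _ _ => by positivity
      have hcos : cos (2 * α) ≤ 0 :=
        cos_nonpos_of_pi_div_two_le_of_le (by linarith) (by linarith [pi_pos])
      have hsin : 1 / 2 ≤ sin α ^ 2 := by nlinarith [sin_sq_add_cos_sq α, cos_two_mul α]
      simp only [pow_zero, one_mul, div_one]
      nlinarith [pi_pos]
    · have h2α := @ih (2 * α) (by linarith) (by rw [← mul_assoc, ← pow_succ]; exact hJ)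
      have hshift : ∑ j ∈ range J, sin (2 ^ (j + 1) * α) ^ 2 / 2 ^ (j + 1)
          = (∑ j ∈ range J, sin (2 ^ j * (2 * α)) ^ 2 / 2 ^ j) / 2 := by
        rw [sum_div]
        refine sum_congr rfl fun j _ => ?_
        rw [show (2 : ℝ) ^ (j + 1) * α = 2 ^ j * (2 * α) by ring]
        ring
      rw [hshift]
      simp only [pow_zero, one_mul, div_one]
      nlinarith [mul_nonneg pi_pos.le (sq_nonneg (sin α))]

lemma exp_I_mul_arg_of_norm_eq_one {z : ℂ} (hz : ‖z‖ = 1) :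
    Complex.exp (Complex.I * z.arg) = z := by
  simpa [hz, mul_comm] using Complex.norm_mul_exp_arg_mul_I z

lemma pow_eq_exp_I_mul_arg {z : ℂ} (hz : ‖z‖ = 1) (k : ℕ) :
    z ^ k = Complex.exp (Complex.I * (k * z.arg : ℝ)) := by
  conv_lhs => rw [← exp_I_mul_arg_of_norm_eq_one hz, ← Complex.exp_nat_mul]
  push_cast
  ring_nf

lemma two_pi_div_le_abs_arg_of_pow_eq_one {z : ℂ} {m : ℕ} (hm : m ≠ 0) (hz : z ^ m = 1)
    (hz1 : z ≠ 1) : 2 * π / m ≤ |z.arg| := by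
  have hnorm := Complex.norm_eq_one_of_pow_eq_one hz hm
  obtain ⟨n, hn⟩ := Complex.exp_eq_one_iff.mp (pow_eq_exp_I_mul_arg hnorm m ▸ hz)
  have hn' : (m * z.arg : ℝ) = n * (2 * π) := by
    apply Complex.ofReal_injective
    push_cast at hn ⊢
    linear_combination (-Complex.I) * hn + (m * z.arg - n * (2 * π) : ℂ) * Complex.I_sq
  have hn0 : n ≠ 0 := by
    rintro rfl
    apply hz1
    have : z.arg = 0 := by simpa [hm] using hn'
    simpa [this] using (exp_I_mul_arg_of_norm_eq_one hnorm).symm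
  have hn1 : (1 : ℝ) ≤ |(n : ℝ)| := by exact_mod_cast Int.one_le_abs hn0
  have hmn : 2 * π ≤ |(m * z.arg : ℝ)| := by
    rw [hn', abs_mul, abs_of_pos (by positivity : (0:ℝ) < 2 * π)]
    nlinarith [pi_pos]
  rw [abs_mul, Nat.abs_cast] at hmn
  rw [div_le_iff₀ (by positivity)]
  linarith

lemma norm_pow_sub_one_sq_of_norm_eq_one {z : ℂ} (hz : ‖z‖ = 1) (k : ℕ) :
    ‖z ^ k - 1‖ ^ 2 = 4 * sin (k * (|z.arg| / 2)) ^ 2 := by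
  rw [pow_eq_exp_I_mul_arg hz, Complex.norm_exp_I_mul_ofReal_sub_one, Real.norm_eq_abs, sq_abs,
    mul_pow, mul_div_assoc]
  rcases abs_choice z.arg with h | h <;> rw [h]
  · norm_num
  · rw [neg_div, mul_neg, sin_neg, neg_sq]
    norm_num

lemma norm_sub_one_le_of_pow_eq_one {z : ℂ} {m J : ℕ} (hm : m ≠ 0) (hz : z ^ m = 1)
    (hJ : m ≤ 2 ^ J) : ‖z - 1‖ ≤ π / 2 * ∑ j ∈ range J, ‖z ^ 2 ^ j - 1‖ ^ 2 / 2 ^ j := by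
  rcases eq_or_ne z 1 with rfl | hz1
  · simp only [one_pow, sub_self, norm_zero]
    positivity
  have hnorm := Complex.norm_eq_one_of_pow_eq_one hz hm
  have hα : |z.arg| / 2 ≤ π / 2 := by linarith [Complex.abs_arg_le_pi z]
  have hJα : π / 2 < 2 ^ J * (|z.arg| / 2) := by
    have h := two_pi_div_le_abs_arg_of_pow_eq_one hm hz hz1
    have : (m : ℝ) ≤ 2 ^ J := by exact_mod_cast hJ
    rw [div_le_iff₀ (by positivity)] at h
    nlinarith [pi_pos, abs_nonneg z.arg]
  calc ‖z - 1‖ ≤ |z.arg| := by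
        conv_lhs => rw [← exp_I_mul_arg_of_norm_eq_one hnorm]
        exact norm_exp_I_mul_ofReal_sub_one_le
    _ ≤ 2 * (π * ∑ j ∈ range J, sin (2 ^ j * (|z.arg| / 2)) ^ 2 / 2 ^ j) := by
        linarith [le_pi_mul_sum_sin_sq hα hJα]
    _ = π / 2 * ∑ j ∈ range J, ‖z ^ 2 ^ j - 1‖ ^ 2 / 2 ^ j := by
        simp only [norm_pow_sub_one_sq_of_norm_eq_one hnorm, Nat.cast_pow, Nat.cast_ofNat, mul_sum]
        exact sum_congr rfl fun j _ => by ring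

lemma natLog_add_one_le_two_mul_logb {m : ℕ} (hm : 2 ≤ m) :
    (Nat.log 2 m + 1 : ℝ) ≤ 2 * logb 2 m := by
  have h1 : 1 ≤ logb 2 m := by
    rw [le_logb_iff_rpow_le one_lt_two (by positivity), rpow_one]
    exact_mod_cast hm
  have h2 := natLog_le_logb m 2
  rw [Nat.cast_ofNat] at h2
  linarith

lemma nsmul_le_of_add_left_invariant {G : Type*} [AddMonoid G] {ρ : G → G → ℝ}
    (htri : ∀ x y z, ρ x z ≤ ρ x y + ρ y z) (hinv : ∀ x y z, ρ (z + x) (z + y) = ρ x y)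
    (hzero : ρ 0 0 = 0) (t : G) (n : ℕ) : ρ (n • t) 0 ≤ n * ρ t 0 := by
  induction n with
  | zero => simp [hzero]
  | succ n ih =>
    have hstep : ρ ((n + 1) • t) (n • t) = ρ t 0 := by
      simpa [succ_nsmul] using hinv t 0 (n • t)
    push_cast
    linarith [htri ((n + 1) • t) (n • t) 0]

section Characters

variable {G : Type*} [AddCommGroup G] [Fintype G]

lemma AddChar.norm_apply_sub_apply (χ : AddChar G ℂ) (x y : G) :
    ‖χ x - χ y‖ = ‖χ (x - y) - 1‖ := by
  have h : χ x - χ y = (χ (x - y) - 1) * χ y := by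
    rw [sub_mul, one_mul, ← AddChar.map_add_eq_mul, sub_add_cancel]
  rw [h, norm_mul, AddChar.norm_apply, mul_one]

lemma AddChar.norm_apply_sub_one_le_two (χ : AddChar G ℂ) (t : G) : ‖χ t - 1‖ ≤ 2 := by
  linarith [norm_sub_le (χ t) 1, AddChar.norm_apply χ t, norm_one (α := ℂ)]

variable {a : AddChar G ℂ → ℝ} {m J : ℕ}

lemma sum_mul_norm_sub_one_le_dyadic (ha : ∀ χ, 0 ≤ a χ) (hm : m ≠ 0)
    (hG : ∀ x : G, m • x = 0) (hJ : m ≤ 2 ^ J) (t : G) :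
    ∑ χ, a χ * ‖χ t - 1‖
      ≤ π / 2 * ∑ j ∈ range J, (∑ χ, a χ * ‖χ (2 ^ j • t) - 1‖ ^ 2) / 2 ^ j := by
  have hroot (χ : AddChar G ℂ) : χ t ^ m = 1 := by
    rw [← AddChar.map_nsmul_eq_pow, hG, AddChar.map_zero_eq_one]
  calc ∑ χ, a χ * ‖χ t - 1‖
      ≤ ∑ χ, a χ * (π / 2 * ∑ j ∈ range J, ‖χ t ^ 2 ^ j - 1‖ ^ 2 / 2 ^ j) :=
        sum_le_sum fun χ _ =>
          mul_le_mul_of_nonneg_left (norm_sub_one_le_of_pow_eq_one hm (hroot χ) hJ) (ha χ)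
    _ = _ := by
        simp_rw [← AddChar.map_nsmul_eq_pow, mul_sum, sum_div, mul_sum]
        rw [sum_comm]
        exact sum_congr rfl fun j _ => sum_congr rfl fun χ _ => by ring

lemma sum_mul_norm_sub_one_le (ha : ∀ χ, 0 ≤ a χ) (hm : 2 ≤ m) (hG : ∀ x : G, m • x = 0)
    {ℓ : G → ℝ} (hℓ0 : ∀ t, 0 ≤ ℓ t) (hℓ : ∀ t (n : ℕ), ℓ (n • t) ≤ n * ℓ t) {K : ℝ} (hK : 0 ≤ K)
    (henergy : ∀ t, ∑ χ, a χ * ‖χ t - 1‖ ^ 2 ≤ K * ℓ t) (t : G) :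
    ∑ χ, a χ * ‖χ t - 1‖ ≤ π * logb 2 m * K * ℓ t := by
  have hJ : m ≤ 2 ^ (Nat.log 2 m + 1) := (Nat.lt_pow_succ_log_self one_lt_two m).le
  have hterm (j : ℕ) : (∑ χ, a χ * ‖χ (2 ^ j • t) - 1‖ ^ 2) / 2 ^ j ≤ K * ℓ t := by
    rw [div_le_iff₀ (by positivity)]
    calc ∑ χ, a χ * ‖χ (2 ^ j • t) - 1‖ ^ 2 ≤ K * ℓ (2 ^ j • t) := henergy _
      _ ≤ K * (2 ^ j * ℓ t) := by
          gcongr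
          exact_mod_cast hℓ t (2 ^ j)
      _ = K * ℓ t * 2 ^ j := by ring
  calc ∑ χ, a χ * ‖χ t - 1‖
      ≤ π / 2 * ∑ j ∈ range (Nat.log 2 m + 1), (∑ χ, a χ * ‖χ (2 ^ j • t) - 1‖ ^ 2) / 2 ^ j :=
        sum_mul_norm_sub_one_le_dyadic ha (by omega) hG hJ t
    _ ≤ π / 2 * ∑ _j ∈ range (Nat.log 2 m + 1), K * ℓ t := by gcongr with j; exact hterm j
    _ = π / 2 * (Nat.log 2 m + 1 : ℝ) * K * ℓ t := by
        rw [sum_const, card_range, nsmul_eq_mul]; push_cast; ring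
    _ ≤ π / 2 * (2 * logb 2 m) * K * ℓ t := by
        gcongr
        · exact hℓ0 t
        · exact natLog_add_one_le_two_mul_logb hm
    _ = π * logb 2 m * K * ℓ t := by ring

lemma sum_mul_norm_sub_one_sq_le (ha : ∀ χ, 0 ≤ a χ) (t : G) :
    ∑ χ, a χ * ‖χ t - 1‖ ^ 2 ≤ 2 * ∑ χ, a χ * ‖χ t - 1‖ := by
  rw [mul_sum]
  refine sum_le_sum fun χ _ => ?_
  have h := χ.norm_apply_sub_one_le_two t
  have := ha χ
  nlinarith [norm_nonneg (χ t - 1), mul_nonneg this (norm_nonneg (χ t - 1))]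

variable {H : Type*} [NormedAddCommGroup H] [InnerProductSpace ℂ H]

noncomputable def fourierSum (f : G → H) (χ : AddChar G ℂ) : H := ∑ z, conj (χ z) • f z

lemma fourierSum_sub (f g : G → H) (χ : AddChar G ℂ) :
    fourierSum (fun z => f z - g z) χ = fourierSum f χ - fourierSum g χ := by
  simp only [fourierSum, smul_sub, sum_sub_distrib]

lemma fourierSum_comp_add_right (f : G → H) (t : G) (χ : AddChar G ℂ) :
    fourierSum (fun z => f (z + t)) χ = χ t • fourierSum f χ := by
  rw [fourierSum, ← (Equiv.subRight t).sum_comp, fourierSum, smul_sum]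
  refine sum_congr rfl fun u _ => ?_
  rw [Equiv.subRight_apply, sub_add_cancel, smul_smul, sub_eq_add_neg, AddChar.map_add_eq_mul,
    AddChar.map_neg_eq_conj, map_mul, Complex.conj_conj, mul_comm]

lemma sum_norm_fourierSum_sq (g : G → H) :
    ∑ χ : AddChar G ℂ, ‖fourierSum g χ‖ ^ 2 = Fintype.card G * ∑ z, ‖g z‖ ^ 2 := by
  classical
  have hinner (χ : AddChar G ℂ) :
      ⟪fourierSum g χ, fourierSum g χ⟫_ℂ = ∑ w, ∑ z, χ (w - z) * ⟪g w, g z⟫_ℂ := by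
    simp only [fourierSum, sum_inner, inner_sum, inner_smul_left, inner_smul_right,
      Complex.conj_conj, sub_eq_add_neg, AddChar.map_add_eq_mul, AddChar.map_neg_eq_conj]
    simp_rw [mul_sum]
    rw [sum_comm]
    exact sum_congr rfl fun _ _ => sum_congr rfl fun _ _ => by ring
  apply Complex.ofReal_injective
  push_cast
  have hnorm_sq (x : H) : ((‖x‖ : ℝ) : ℂ) ^ 2 = ⟪x, x⟫_ℂ := (inner_self_eq_norm_sq_to_K x).symm
  simp_rw [hnorm_sq, hinner]
  calc ∑ χ : AddChar G ℂ, ∑ w, ∑ z, χ (w - z) * ⟪g w, g z⟫_ℂ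
      = ∑ w, ∑ z, (∑ χ : AddChar G ℂ, χ (w - z)) * ⟪g w, g z⟫_ℂ := by
        simp_rw [sum_mul]
        rw [sum_comm]
        exact sum_congr rfl fun w _ => sum_comm
    _ = Fintype.card G * ∑ w, ⟪g w, g w⟫_ℂ := by
        simp [AddChar.sum_apply_eq_ite, sub_eq_zero, ite_mul, mul_sum]

lemma sum_norm_sub_one_sq_mul_norm_fourierSum_sq (f : G → H) (t : G) :
    ∑ χ : AddChar G ℂ, ‖χ t - 1‖ ^ 2 * ‖fourierSum f χ‖ ^ 2
      = Fintype.card G * ∑ z, ‖f (z + t) - f z‖ ^ 2 := by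
  rw [← sum_norm_fourierSum_sq]
  refine sum_congr rfl fun χ _ => ?_
  rw [fourierSum_sub, fourierSum_comp_add_right, ← mul_pow, ← norm_smul, sub_smul, one_smul]

noncomputable def fourierWeight (f : G → H) (χ : AddChar G ℂ) : ℝ :=
  ‖fourierSum f χ‖ ^ 2 / Fintype.card G ^ 2

lemma fourierWeight_nonneg (f : G → H) (χ : AddChar G ℂ) : 0 ≤ fourierWeight f χ := by
  unfold fourierWeight
  positivity

lemma sum_fourierWeight_mul_norm_sub_one_sq (f : G → H) (t : G) :
    ∑ χ, fourierWeight f χ * ‖χ t - 1‖ ^ 2 = 𝔼 z, ‖f (z + t) - f z‖ ^ 2 := by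
  have hN : (Fintype.card G : ℝ) ≠ 0 := by positivity
  rw [expect_eq_sum_div_card, card_univ]
  calc ∑ χ, fourierWeight f χ * ‖χ t - 1‖ ^ 2
      = (∑ χ, ‖χ t - 1‖ ^ 2 * ‖fourierSum f χ‖ ^ 2) / Fintype.card G ^ 2 := by
        rw [sum_div]
        exact sum_congr rfl fun χ _ => by unfold fourierWeight; ring
    _ = _ := by
        rw [sum_norm_sub_one_sq_mul_norm_fourierSum_sq]
        field_simp

lemma sum_fourierWeight_mul_norm_sub_one_sq_mem_Icc {ρ : G → G → ℝ} {D : ℝ} {f : G → H}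
    (hρ : ∀ x y, 0 ≤ ρ x y) (hinv : ∀ x y z, ρ (z + x) (z + y) = ρ x y)
    (hf : ∀ x y, √(ρ x y) ≤ ‖f x - f y‖ ∧ ‖f x - f y‖ ≤ D * √(ρ x y)) (t : G) :
    ∑ χ, fourierWeight f χ * ‖χ t - 1‖ ^ 2 ∈ Set.Icc (ρ t 0) (D ^ 2 * ρ t 0) := by
  have hpt (z : G) : ρ t 0 ≤ ‖f (z + t) - f z‖ ^ 2 ∧ ‖f (z + t) - f z‖ ^ 2 ≤ D ^ 2 * ρ t 0 := by
    obtain ⟨hlo, hhi⟩ := hf (z + t) z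
    rw [show ρ (z + t) z = ρ t 0 by simpa using hinv t 0 z] at hlo hhi
    refine ⟨(sqrt_le_iff.mp hlo).2, ?_⟩
    simpa [mul_pow, sq_sqrt (hρ t 0)] using pow_le_pow_left₀ (norm_nonneg _) hhi 2
  rw [sum_fourierWeight_mul_norm_sub_one_sq]
  exact ⟨le_expect univ_nonempty fun z _ => (hpt z).1, expect_le univ_nonempty fun z _ => (hpt z).2⟩

end Characters

/-- There is a universal `C > 0` such that: if `G` is a finite Abelian
group of exponent dividing `m ≥ 2` with an invariant metric `ρ`, and `(G, √ρ)` embeds in a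
complex inner product space with distortion `D ≥ 1` (normalized as below), then there are
nonnegative weights `a_χ` on the characters with
`ρ(x,y) ≤ 2·D²·Σ_χ a_χ·|χ(x) - χ(y)| ≤ C·D⁴·(log m)·ρ(x,y)`, i.e. `(G, ρ)` embeds in a
weighted ℓ₁ space over the characters with distortion `O(D⁴ log m)`. -/
theorem abelian_negative_type_embeds_in_L1 :
    ∃ C : ℝ, 0 < C ∧
      ∀ (G : Type) [AddCommGroup G] [Fintype G] (ρ : G → G → ℝ),
        (∀ x y, ρ x y = ρ y x) →
        (∀ x y z, ρ x z ≤ ρ x y + ρ y z) →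
        (∀ x y, ρ x y = 0 ↔ x = y) →
        (∀ x y z : G, ρ (z + x) (z + y) = ρ x y) →
        ∀ m : ℕ, 2 ≤ m → (∀ x : G, m • x = 0) →
        ∀ D : ℝ, 1 ≤ D →
        ∀ (H : Type) [NormedAddCommGroup H] [InnerProductSpace ℂ H] (f : G → H),
        (∀ x y : G,
          Real.sqrt (ρ x y) ≤ ‖f x - f y‖ ∧ ‖f x - f y‖ ≤ D * Real.sqrt (ρ x y)) →
        ∃ a : AddChar G ℂ → ℝ, (∀ χ, 0 ≤ a χ) ∧
          ∀ x y : G,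
            ρ x y ≤ 2 * D ^ 2 * (∑ χ : AddChar G ℂ, a χ * ‖χ x - χ y‖) ∧
              2 * D ^ 2 * (∑ χ : AddChar G ℂ, a χ * ‖χ x - χ y‖) ≤
                C * D ^ 4 * Real.log m * ρ x y := by
  refine ⟨2 * π / log 2, by positivity, ?_⟩
  intro G _ _ ρ hsymm htri hzero hinv m hm hG D hD H _ _ f hf
  have hρ_nonneg (x y : G) : 0 ≤ ρ x y := by linarith [htri x y x, hsymm x y, (hzero x x).2 rfl]
  have hρ_sub (x y : G) : ρ x y = ρ (x - y) 0 := by simpa using hinv (x - y) 0 y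
  have henergy := sum_fourierWeight_mul_norm_sub_one_sq_mem_Icc hρ_nonneg hinv hf
  have hupper := sum_mul_norm_sub_one_le (fourierWeight_nonneg f) hm hG (hρ_nonneg · 0)
    (nsmul_le_of_add_left_invariant htri hinv ((hzero 0 0).2 rfl)) (by positivity)
    (fun t => (henergy t).2)
  refine ⟨fourierWeight f, fourierWeight_nonneg f, fun x y => ?_⟩
  simp_rw [AddChar.norm_apply_sub_apply, hρ_sub x y]
  have hS : 0 ≤ ∑ χ, fourierWeight f χ * ‖χ (x - y) - 1‖ :=
    sum_nonneg fun χ _ => mul_nonneg (fourierWeight_nonneg f χ) (norm_nonneg _)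
  constructor
  · nlinarith [(henergy (x - y)).1, sum_mul_norm_sub_one_sq_le (fourierWeight_nonneg f) (x - y),
      one_le_pow₀ (n := 2) hD]
  · calc 2 * D ^ 2 * ∑ χ, fourierWeight f χ * ‖χ (x - y) - 1‖
        ≤ 2 * D ^ 2 * (π * logb 2 m * D ^ 2 * ρ (x - y) 0) := by gcongr; exact hupper _
      _ = 2 * π / log 2 * D ^ 4 * log m * ρ (x - y) 0 := by
          rw [logb]
          field_simp
end

section
/- There exists a universal constant c > 0 such that for every complex number z with |z| = 1 and every integer k ≥ 1, if 2^{−k} < |z − 1| ≤ 2^{−k+1} then |1 − z^{2^{k−1}}| ≥ c·2^k·|z − 1|. -/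
/-!
Write `z = exp (i θ)` with `θ = arg z ∈ [-π, π]`. Jordan's inequality `sin t ≥ (2/π) t` on
`[0, π/2]` makes the chord `|z - 1| = 2 |sin (θ/2)|` comparable to the arc: `(2/π)|θ| ≤ |z - 1| ≤ |θ|`.
If `n |z - 1| ≤ 2` then `|n θ| ≤ π`, so the comparison also applies to `z ^ n = exp (i n θ)`, giving
`|1 - z ^ n| ≥ (2/π) n |θ| ≥ (2/π) n |z - 1|`. With `n = 2^(k-1)` this is the claim for `c = 1/π`.
-/

open Complex Real

theorem Real.two_div_pi_mul_abs_le_norm_exp_I_mul_ofReal_sub_one {x : ℝ} (hx : |x| ≤ π) :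
    2 / π * |x| ≤ ‖Complex.exp (I * x) - 1‖ := by
  have hx2 : |x / 2| ≤ π / 2 := by rw [abs_div, abs_two]; linarith
  calc 2 / π * |x| = 2 * (2 / π * |x / 2|) := by rw [abs_div, abs_two]; ring
    _ ≤ 2 * |Real.sin (x / 2)| := by gcongr; exact mul_abs_le_abs_sin hx2
    _ = ‖Complex.exp (I * x) - 1‖ := by rw [norm_exp_I_mul_ofReal_sub_one]; simp

theorem Complex.exp_I_mul_arg {z : ℂ} (hz : ‖z‖ = 1) : exp (I * arg z) = z := by
  simpa [hz, mul_comm] using norm_mul_exp_arg_mul_I z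

theorem Complex.two_div_pi_mul_natCast_mul_norm_sub_one_le_norm_one_sub_pow {z : ℂ}
    (hz : ‖z‖ = 1) {n : ℕ} (hn : n * ‖z - 1‖ ≤ 2) :
    2 / π * n * ‖z - 1‖ ≤ ‖1 - z ^ n‖ := by
  obtain ⟨θ, hθ, rfl⟩ : ∃ θ : ℝ, |θ| ≤ π ∧ exp (I * θ) = z :=
    ⟨arg z, abs_arg_le_pi z, exp_I_mul_arg hz⟩
  have hnθ : |n * θ| ≤ π := calc
    |n * θ| = π / 2 * (n * (2 / π * |θ|)) := by
      rw [abs_mul, Nat.abs_cast]; field_simp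
    _ ≤ π / 2 * (n * ‖exp (I * θ) - 1‖) := by
      gcongr; exact two_div_pi_mul_abs_le_norm_exp_I_mul_ofReal_sub_one hθ
    _ ≤ π := by nlinarith [pi_pos]
  have hpow : exp (I * θ) ^ n = exp (I * ↑(n * θ)) := by
    rw [← exp_nat_mul]; push_cast; ring_nf
  calc 2 / π * n * ‖exp (I * θ) - 1‖ ≤ 2 / π * |n * θ| := by
        rw [abs_mul, Nat.abs_cast, mul_assoc]; gcongr; exact norm_exp_I_mul_ofReal_sub_one_le
    _ ≤ ‖exp (I * ↑(n * θ)) - 1‖ := two_div_pi_mul_abs_le_norm_exp_I_mul_ofReal_sub_one hnθ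
    _ = ‖1 - exp (I * θ) ^ n‖ := by rw [hpow, norm_sub_rev]

/-- There is a universal `c > 0` such that for every unimodular complex
number `z` and every integer `k ≥ 1`, if `2^{-k} < |z - 1| ≤ 2^{-k+1}` then
`|1 - z^{2^{k-1}}| ≥ c·2^k·|z - 1|`. -/
theorem unimodular_power_lower_bound :
    ∃ c : ℝ, 0 < c ∧
      ∀ z : ℂ, ‖z‖ = 1 →
        ∀ k : ℕ, 1 ≤ k →
          (1 : ℝ) / 2 ^ k < ‖z - 1‖ →
          ‖z - 1‖ ≤ (1 : ℝ) / 2 ^ (k - 1) →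
          c * 2 ^ k * ‖z - 1‖ ≤ ‖1 - z ^ 2 ^ (k - 1)‖ := by
  refine ⟨1 / π, by positivity, fun z hz k hk _ hub => ?_⟩
  have hsmall : ((2 ^ (k - 1) : ℕ) : ℝ) * ‖z - 1‖ ≤ 2 := by
    rw [le_div_iff₀ (by positivity)] at hub
    push_cast; linarith
  have h2k : (2 : ℝ) ^ k = 2 * 2 ^ (k - 1) := by rw [← pow_succ', Nat.sub_add_cancel hk]
  calc 1 / π * 2 ^ k * ‖z - 1‖ = 2 / π * ((2 ^ (k - 1) : ℕ) : ℝ) * ‖z - 1‖ := by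
        rw [h2k]; push_cast; ring
    _ ≤ ‖1 - z ^ 2 ^ (k - 1)‖ := two_div_pi_mul_natCast_mul_norm_sub_one_le_norm_one_sub_pow hz hsmall
end

section
/- There is a universal constant C > 0 with the following property. Let d ≥ 1 and let ρ be an invariant metric on the group G = (ZMod 2)^d (i.e. ρ(z + x, z + y) = ρ(x, y) for all x, y, z ∈ G). Suppose D ≥ 1 and there exist a complex inner product space H and f : G → H with √(ρ(x, y)) ≤ ‖f(x) − f(y)‖ ≤ D·√(ρ(x, y)) for all x, y. Then there exist nonnegative reals (a_S), indexed by the subsets S of {1, …, d}, such that, writing χ_S(x) = (−1)^{Σ_{i ∈ S} x_i}, for all x, y ∈ G: ρ(x, y) ≤ 2·D²·Σ_S a_S·|χ_S(x) − χ_S(y)| ≤ C·D⁴·ρ(x, y). In particular (G, ρ) embeds into ℓ₁ with distortion at most C·D⁴. -/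
/-- The Walsh character of the discrete cube `(ZMod 2)^d` associated to a subset
`S ⊆ {1, …, d}`: `χ_S(x) = (-1)^{Σ_{i ∈ S} x_i}`. -/
def walshChar {d : ℕ} (S : Finset (Fin d)) (x : Fin d → ZMod 2) : ℝ :=
  (-1 : ℝ) ^ (∑ i ∈ S, (x i).val)

/-!
Averaging `f` over translations gives the invariant kernel
`F(x, y) = 𝔼_z ‖f(z + x) - f(z + y)‖²`, which is still squeezed between `ρ` and `D²ρ`
because `ρ` is invariant. Writing `f̂(S) = Σ_u χ_S(u) f(u)`, orthogonality of the Walsh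
characters (Wiener–Khinchin on the cube) gives
`F(x, y) = 2 · 4⁻ᵈ Σ_S ‖f̂(S)‖² |χ_S(x) - χ_S(y)|`, a nonnegative combination of cut metrics.
So `a_S = ‖f̂(S)‖² / (4ᵈ D²)` works with `C = 1`.
-/

open Finset
open scoped BigOperators InnerProductSpace

theorem Pi.zmod_two_add_self {ι : Type*} (x : ι → ZMod 2) : x + x = 0 :=
  funext fun i => CharTwo.add_self_eq_zero (x i)

section walshChar

variable {d : ℕ} (S : Finset (Fin d))

theorem walshChar_eq_prod (x : Fin d → ZMod 2) :
    walshChar S x = ∏ i ∈ S, (-1 : ℝ) ^ (x i).val :=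
  (prod_pow_eq_pow_sum S _ _).symm

@[simp]
theorem walshChar_zero : walshChar S 0 = 1 := by
  simp [walshChar]

theorem walshChar_add (x y : Fin d → ZMod 2) :
    walshChar S (x + y) = walshChar S x * walshChar S y := by
  have neg_one_pow_val_add (a b : ZMod 2) :
      (-1 : ℝ) ^ (a + b).val = (-1) ^ a.val * (-1) ^ b.val := by
    rw [ZMod.val_add, ← neg_one_pow_eq_pow_mod_two, pow_add]
  simp only [walshChar_eq_prod, Pi.add_apply, neg_one_pow_val_add, prod_mul_distrib]

theorem walshChar_eq_one_or_eq_neg_one (x : Fin d → ZMod 2) :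
    walshChar S x = 1 ∨ walshChar S x = -1 :=
  neg_one_pow_eq_or ℝ _

theorem abs_walshChar_sub_walshChar (x y : Fin d → ZMod 2) :
    |walshChar S x - walshChar S y| = 1 - walshChar S (x + y) := by
  rw [walshChar_add]
  rcases walshChar_eq_one_or_eq_neg_one S x with hx | hx <;>
    rcases walshChar_eq_one_or_eq_neg_one S y with hy | hy <;> norm_num [hx, hy]

theorem sum_walshChar (t : Fin d → ZMod 2) :
    ∑ S : Finset (Fin d), walshChar S t = if t = 0 then 2 ^ d else 0 := by
  have hprod : ∑ S : Finset (Fin d), walshChar S t = ∏ i, ((-1 : ℝ) ^ (t i).val + 1) := by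
    simp only [prod_add, prod_const_one, mul_one, powerset_univ, walshChar_eq_prod]
  rw [hprod]
  split_ifs with ht
  · simp [ht]
    norm_num
  · obtain ⟨i, hi⟩ := Function.ne_iff.mp ht
    refine prod_eq_zero (mem_univ i) ?_
    have hti : t i = 1 := Fin.eq_one_of_ne_zero (t i) hi
    rw [hti, ZMod.val_one]
    norm_num

end walshChar

section walshTransform

variable (𝕜 : Type*) {H : Type*} [RCLike 𝕜] [NormedAddCommGroup H] [InnerProductSpace 𝕜 H] {d : ℕ}

def walshTransform (f : (Fin d → ZMod 2) → H) (S : Finset (Fin d)) : H :=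
  ∑ u, (walshChar S u : 𝕜) • f u

variable {𝕜}

theorem inner_walshTransform_self (f : (Fin d → ZMod 2) → H) (S : Finset (Fin d)) :
    ⟪walshTransform 𝕜 f S, walshTransform 𝕜 f S⟫_𝕜 =
      ∑ u, ∑ v, (walshChar S (u + v) : 𝕜) * ⟪f u, f v⟫_𝕜 := by
  simp only [walshTransform, sum_inner, inner_sum, inner_smul_left, inner_smul_right,
    RCLike.conj_ofReal, walshChar_add, mul_sum]
  rw [sum_comm]
  refine sum_congr rfl fun u _ => sum_congr rfl fun v _ => ?_
  push_cast
  ring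

theorem sum_walshChar_mul_inner_walshTransform_self (f : (Fin d → ZMod 2) → H)
    (t : Fin d → ZMod 2) :
    ∑ S, (walshChar S t : 𝕜) * ⟪walshTransform 𝕜 f S, walshTransform 𝕜 f S⟫_𝕜 =
      2 ^ d * ∑ u, ⟪f u, f (u + t)⟫_𝕜 := by
  have hsolve (u v : Fin d → ZMod 2) : u + v + t = 0 ↔ v = u + t := by
    rw [show u + v + t = v + (u + t) by abel, add_eq_zero_iff_eq_neg,
      neg_eq_of_add_eq_zero_right (Pi.zmod_two_add_self (u + t))]
  calc ∑ S, (walshChar S t : 𝕜) * ⟪walshTransform 𝕜 f S, walshTransform 𝕜 f S⟫_𝕜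
      = ∑ u, ∑ v, ((∑ S, walshChar S (u + v + t) : ℝ) : 𝕜) * ⟪f u, f v⟫_𝕜 := by
        simp only [inner_walshTransform_self, mul_sum, RCLike.ofReal_sum, sum_mul]
        rw [sum_comm]
        refine sum_congr rfl fun u _ => ?_
        rw [sum_comm]
        refine sum_congr rfl fun v _ => sum_congr rfl fun S _ => ?_
        rw [walshChar_add _ (u + v), RCLike.ofReal_mul]
        ring
    _ = 2 ^ d * ∑ u, ⟪f u, f (u + t)⟫_𝕜 := by
        simp only [sum_walshChar, hsolve, mul_sum, apply_ite ((↑) : ℝ → 𝕜), ite_mul,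
          RCLike.ofReal_zero, zero_mul, sum_ite_eq', mem_univ, if_true]
        push_cast
        rfl

theorem sum_norm_sq_walshTransform_mul_walshChar (f : (Fin d → ZMod 2) → H)
    (t : Fin d → ZMod 2) :
    ∑ S, ‖walshTransform 𝕜 f S‖ ^ 2 * walshChar S t =
      2 ^ d * ∑ u, RCLike.re (⟪f u, f (u + t)⟫_𝕜) := by
  have := congrArg RCLike.re (sum_walshChar_mul_inner_walshTransform_self (𝕜 := 𝕜) f t)
  rw [← RCLike.ofReal_ofNat, ← RCLike.ofReal_pow, RCLike.re_ofReal_mul] at this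
  simpa [map_sum, inner_self_eq_norm_sq, mul_comm] using this

theorem sum_norm_sq_walshTransform_mul_one_sub (f : (Fin d → ZMod 2) → H)
    (t : Fin d → ZMod 2) :
    2 * ∑ S, ‖walshTransform 𝕜 f S‖ ^ 2 * (1 - walshChar S t) =
      2 ^ d * ∑ z, ‖f z - f (z + t)‖ ^ 2 := by
  have hshift : ∑ z, ‖f (z + t)‖ ^ 2 = ∑ z, ‖f z‖ ^ 2 :=
    Equiv.sum_comp (Equiv.addRight t) fun z => ‖f z‖ ^ 2
  have hdiag := sum_norm_sq_walshTransform_mul_walshChar (𝕜 := 𝕜) f 0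
  simp only [walshChar_zero, mul_one, add_zero, inner_self_eq_norm_sq] at hdiag
  simp only [mul_sub, mul_one, sum_sub_distrib, hdiag, sum_norm_sq_walshTransform_mul_walshChar,
    @norm_sub_sq 𝕜, sum_add_distrib, hshift, ← mul_sum]
  ring

theorem expect_norm_sub_sq_eq_sum_abs_walshChar_sub (f : (Fin d → ZMod 2) → H)
    (x y : Fin d → ZMod 2) :
    𝔼 z, ‖f (z + x) - f (z + y)‖ ^ 2 =
      2 * ∑ S, ‖walshTransform 𝕜 f S‖ ^ 2 / 4 ^ d * |walshChar S x - walshChar S y| := by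
  have hshift :
      ∑ z, ‖f (z + x) - f (z + y)‖ ^ 2 = ∑ z, ‖f z - f (z + (x + y))‖ ^ 2 := by
    refine (sum_congr rfl fun z _ => ?_).trans
      (Equiv.sum_comp (Equiv.addRight x) fun z => ‖f z - f (z + (x + y))‖ ^ 2)
    rw [Equiv.coe_addRight, ← add_assoc, add_assoc z x x, Pi.zmod_two_add_self, add_zero]
  have hcard : (Fintype.card (Fin d → ZMod 2) : ℝ) = 2 ^ d := by simp
  have hfour : (4 : ℝ) ^ d = 2 ^ d * 2 ^ d := by rw [← mul_pow]; norm_num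
  simp only [abs_walshChar_sub_walshChar, div_mul_eq_mul_div, ← sum_div]
  rw [Fintype.expect_eq_sum_div_card, hcard, hshift, mul_div_assoc',
    sum_norm_sq_walshTransform_mul_one_sub, hfour]
  field_simp

end walshTransform

/-- There is a universal `C > 0` such that: for every invariant metric
`ρ` on the discrete cube `G = (ZMod 2)^d`, if `(G, √ρ)` embeds in a complex inner product
space with distortion `D ≥ 1` (normalized as below), then there are nonnegative weights
`a_S` on subsets `S ⊆ {1, …, d}` with
`ρ(x,y) ≤ 2·D²·Σ_S a_S·|χ_S(x) - χ_S(y)| ≤ C·D⁴·ρ(x,y)`; in particular `(G, ρ)` embeds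
into `ℓ₁` with distortion at most `C·D⁴`. -/
theorem cube_negative_type_embeds_in_L1 :
    ∃ C : ℝ, 0 < C ∧
      ∀ (d : ℕ), 1 ≤ d →
        ∀ ρ : (Fin d → ZMod 2) → (Fin d → ZMod 2) → ℝ,
        (∀ x y, ρ x y = ρ y x) →
        (∀ x y z, ρ x z ≤ ρ x y + ρ y z) →
        (∀ x y, ρ x y = 0 ↔ x = y) →
        (∀ x y z, ρ (z + x) (z + y) = ρ x y) →
        ∀ D : ℝ, 1 ≤ D →
        ∀ (H : Type) [NormedAddCommGroup H] [InnerProductSpace ℂ H]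
          (f : (Fin d → ZMod 2) → H),
        (∀ x y, Real.sqrt (ρ x y) ≤ ‖f x - f y‖ ∧ ‖f x - f y‖ ≤ D * Real.sqrt (ρ x y)) →
        ∃ a : Finset (Fin d) → ℝ, (∀ S, 0 ≤ a S) ∧
          ∀ x y,
            ρ x y ≤ 2 * D ^ 2 *
                (∑ S : Finset (Fin d), a S * |walshChar S x - walshChar S y|) ∧
              2 * D ^ 2 * (∑ S : Finset (Fin d), a S * |walshChar S x - walshChar S y|) ≤
                C * D ^ 4 * ρ x y := by
  refine ⟨1, one_pos, fun d _ ρ hsymm htri hzero hinv D hD H _ _ f hf => ?_⟩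
  have hρ (x y) : 0 ≤ ρ x y := by linarith [htri x y x, hsymm x y, (hzero x x).2 rfl]
  have hlower (x y) : ρ x y ≤ ‖f x - f y‖ ^ 2 :=
    (Real.sqrt_le_left (norm_nonneg _)).1 (hf x y).1
  have hupper (x y) : ‖f x - f y‖ ^ 2 ≤ D ^ 2 * ρ x y := by
    simpa [mul_pow, Real.sq_sqrt (hρ x y)] using pow_le_pow_left₀ (norm_nonneg _) (hf x y).2 2
  refine ⟨fun S => ‖walshTransform ℂ f S‖ ^ 2 / 4 ^ d / D ^ 2, fun S => by positivity,
    fun x y => ?_⟩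
  have hD0 : D ≠ 0 := by positivity
  have hrepr : 2 * D ^ 2 * ∑ S, ‖walshTransform ℂ f S‖ ^ 2 / 4 ^ d / D ^ 2 *
      |walshChar S x - walshChar S y| = 𝔼 z, ‖f (z + x) - f (z + y)‖ ^ 2 := by
    rw [expect_norm_sub_sq_eq_sum_abs_walshChar_sub (𝕜 := ℂ), mul_assoc, mul_sum]
    congr 1
    refine sum_congr rfl fun S _ => ?_
    field_simp
  rw [hrepr]
  constructor
  · calc ρ x y = 𝔼 z, ρ (z + x) (z + y) := by simp [hinv]
      _ ≤ 𝔼 z, ‖f (z + x) - f (z + y)‖ ^ 2 := expect_le_expect fun z _ => hlower _ _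
  · calc 𝔼 z, ‖f (z + x) - f (z + y)‖ ^ 2 ≤ 𝔼 z, D ^ 2 * ρ (z + x) (z + y) :=
          expect_le_expect fun z _ => hupper _ _
      _ = D ^ 2 * ρ x y := by simp [hinv]
      _ ≤ 1 * D ^ 4 * ρ x y := by
        have hD2 : D ^ 2 ≤ D ^ 4 := pow_le_pow_right₀ hD (by norm_num)
        nlinarith [hρ x y]
end

section
/- Let V be a nonempty finite set, H a complex inner product space, and M : V × V → ℝ a symmetric matrix with nonnegative entries whose rows sum to 1 (Σ_{y ∈ V} M(x, y) = 1 for every x). Suppose 0 ≤ λ < 1 is such that Σ_{x, y ∈ V} M(x, y)·g(x)·g(y) ≤ λ·Σ_{x ∈ V} g(x)² for every function g : V → ℝ with Σ_{x ∈ V} g(x) = 0. Then for every f : V → H: (1/|V|²)·Σ_{x, y ∈ V} ‖f(x) − f(y)‖² ≤ (1/(1 − λ))·(1/|V|)·Σ_{x, y ∈ V} M(x, y)·‖f(x) − f(y)‖². -/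
/-!
Center `f`, so that `∑ x, f x = 0`; both sides of the inequality only see differences
`f x - f y`, so nothing changes. For centered `f` with `S = ∑ x, ‖f x‖²` and
`T = ∑ x y, M x y ⟪f x, f y⟫`, expanding the squares gives `∑ x y, ‖f x - f y‖² = 2 |V| S`
and, since `M` is doubly stochastic, `∑ x y, M x y ‖f x - f y‖² = 2 S - 2 T`. Finally
`T ≤ λ S`: the coordinates of `f` in an orthonormal basis of the span of its range are
mean-zero real functions, to each of which the spectral gap hypothesis applies.
-/

open Finset RealInnerProductSpace

section

variable {V : Type*} [Fintype V] {E : Type*} [NormedAddCommGroup E] [InnerProductSpace ℝ E]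
  {M : V → V → ℝ} {lam : ℝ}

theorem sum_sum_mul_inner_le_of_finiteDimensional [FiniteDimensional ℝ E]
    (hgap : ∀ g : V → ℝ, (∑ x, g x) = 0 →
      (∑ x, ∑ y, M x y * g x * g y) ≤ lam * ∑ x, g x ^ 2)
    (f : V → E) (hf : ∑ x, f x = 0) :
    ∑ x, ∑ y, M x y * ⟪f x, f y⟫ ≤ lam * ∑ x, ‖f x‖ ^ 2 := by
  let b := stdOrthonormalBasis ℝ E
  let c : Fin (Module.finrank ℝ E) → V → ℝ := fun i x => ⟪b i, f x⟫
  have hinner (x y : V) : ⟪f x, f y⟫ = ∑ i, c i x * c i y := by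
    rw [← b.sum_inner_mul_inner (f x) (f y)]
    simp only [c, real_inner_comm]
  have hnorm (x : V) : ‖f x‖ ^ 2 = ∑ i, c i x ^ 2 := by
    rw [← real_inner_self_eq_norm_sq, hinner]
    simp only [sq]
  have hc (i) : ∑ x, c i x = 0 := by
    simp only [c]
    rw [← inner_sum, hf, inner_zero_right]
  calc ∑ x, ∑ y, M x y * ⟪f x, f y⟫
      = ∑ i, ∑ x, ∑ y, M x y * c i x * c i y := by
        simp only [hinner, mul_sum, ← mul_assoc]
        exact (sum_congr rfl fun _ _ => sum_comm).trans sum_comm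
    _ ≤ ∑ i, lam * ∑ x, c i x ^ 2 := sum_le_sum fun i _ => hgap (c i) (hc i)
    _ = lam * ∑ x, ‖f x‖ ^ 2 := by
        rw [← mul_sum, sum_comm]
        simp only [hnorm]

theorem sum_sum_mul_inner_le
    (hgap : ∀ g : V → ℝ, (∑ x, g x) = 0 →
      (∑ x, ∑ y, M x y * g x * g y) ≤ lam * ∑ x, g x ^ 2)
    (f : V → E) (hf : ∑ x, f x = 0) :
    ∑ x, ∑ y, M x y * ⟪f x, f y⟫ ≤ lam * ∑ x, ‖f x‖ ^ 2 := by
  let W := Submodule.span ℝ (Set.range f)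
  have : FiniteDimensional ℝ W := FiniteDimensional.span_of_finite ℝ (Set.finite_range f)
  let F : V → W := fun x => ⟨f x, Submodule.subset_span (Set.mem_range_self x)⟩
  have hF : ∑ x, F x = 0 := Subtype.ext (by simpa [F] using hf)
  exact sum_sum_mul_inner_le_of_finiteDimensional hgap F hF

theorem sum_sum_norm_sub_sq (f : V → E) :
    ∑ x, ∑ y, ‖f x - f y‖ ^ 2 =
      2 * Fintype.card V * ∑ x, ‖f x‖ ^ 2 - 2 * ‖∑ x, f x‖ ^ 2 := by
  have : ∑ x, ∑ y, ⟪f x, f y⟫ = ‖∑ x, f x‖ ^ 2 := by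
    rw [← real_inner_self_eq_norm_sq, sum_inner]
    simp only [inner_sum]
  simp only [norm_sub_sq_real, sum_add_distrib, sum_sub_distrib, ← mul_sum, sum_const,
    card_univ, nsmul_eq_mul, this]
  ring

theorem sum_sum_mul_norm_sub_sq (hrow : ∀ x, ∑ y, M x y = 1)
    (hcol : ∀ y, ∑ x, M x y = 1) (f : V → E) :
    ∑ x, ∑ y, M x y * ‖f x - f y‖ ^ 2 =
      2 * ∑ x, ‖f x‖ ^ 2 - 2 * ∑ x, ∑ y, M x y * ⟪f x, f y⟫ := by
  have hleft : ∑ x, ∑ y, M x y * ‖f x‖ ^ 2 = ∑ x, ‖f x‖ ^ 2 := by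
    simp only [← sum_mul, hrow, one_mul]
  have hright : ∑ x, ∑ y, M x y * ‖f y‖ ^ 2 = ∑ x, ‖f x‖ ^ 2 := by
    rw [sum_comm]
    simp only [← sum_mul, hcol, one_mul]
  have hexpand (x y : V) : M x y * ‖f x - f y‖ ^ 2 =
      M x y * ‖f x‖ ^ 2 + M x y * ‖f y‖ ^ 2 - 2 * (M x y * ⟪f x, f y⟫) := by
    rw [norm_sub_sq_real]
    ring
  simp only [hexpand, sum_add_distrib, sum_sub_distrib, hleft, hright, ← mul_sum]
  ring

theorem sum_sub_inv_card_smul_sum [Nonempty V] (f : V → E) :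
    ∑ x, (f x - (Fintype.card V : ℝ)⁻¹ • ∑ y, f y) = 0 := by
  rw [sum_sub_distrib, sum_const, card_univ, ← Nat.cast_smul_eq_nsmul ℝ, smul_smul,
    mul_inv_cancel₀ (by positivity), one_smul, sub_self]

theorem one_sub_mul_sum_sum_norm_sub_sq_le [Nonempty V]
    (hrow : ∀ x, ∑ y, M x y = 1) (hcol : ∀ y, ∑ x, M x y = 1)
    (hgap : ∀ g : V → ℝ, (∑ x, g x) = 0 →
      (∑ x, ∑ y, M x y * g x * g y) ≤ lam * ∑ x, g x ^ 2)
    (f : V → E) :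
    (1 - lam) * ∑ x, ∑ y, ‖f x - f y‖ ^ 2 ≤
      Fintype.card V * ∑ x, ∑ y, M x y * ‖f x - f y‖ ^ 2 := by
  set g : V → E := fun x => f x - (Fintype.card V : ℝ)⁻¹ • ∑ y, f y
  have hg : ∑ x, g x = 0 := sum_sub_inv_card_smul_sum f
  have hfg (x y : V) : f x - f y = g x - g y := (sub_sub_sub_cancel_right _ _ _).symm
  simp only [hfg, sum_sum_norm_sub_sq, sum_sum_mul_norm_sub_sq hrow hcol, hg, norm_zero]
  have hquad := mul_le_mul_of_nonneg_left (sum_sum_mul_inner_le hgap g hg)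
    (Nat.cast_nonneg (Fintype.card V) : (0 : ℝ) ≤ Fintype.card V)
  linarith

end

theorem poincare_of_spectral_gap_general {V : Type*} [Fintype V] [Nonempty V]
    {H : Type*} [NormedAddCommGroup H] [InnerProductSpace ℂ H]
    (M : V → V → ℝ)
    (hsymm : ∀ x y, M x y = M y x)
    (hrow : ∀ x, ∑ y, M x y = 1)
    (lam : ℝ) (hlam1 : lam < 1)
    (hgap : ∀ g : V → ℝ, (∑ x, g x) = 0 →
      (∑ x, ∑ y, M x y * g x * g y) ≤ lam * ∑ x, g x ^ 2)
    (f : V → H) :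
    (1 / (Fintype.card V : ℝ) ^ 2) * ∑ x, ∑ y, ‖f x - f y‖ ^ 2 ≤
      (1 / (1 - lam)) *
        ((1 / (Fintype.card V : ℝ)) * ∑ x, ∑ y, M x y * ‖f x - f y‖ ^ 2) := by
  let _ : InnerProductSpace ℝ H := InnerProductSpace.complexToReal
  have hcol (y : V) : ∑ x, M x y = 1 := by simpa only [hsymm y] using hrow y
  have key := one_sub_mul_sum_sum_norm_sub_sq_le hrow hcol hgap f
  have hn : (0 : ℝ) < Fintype.card V := Nat.cast_pos.mpr Fintype.card_pos
  have hlam : 0 < 1 - lam := sub_pos.mpr hlam1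
  calc 1 / (Fintype.card V : ℝ) ^ 2 * ∑ x, ∑ y, ‖f x - f y‖ ^ 2
      = (1 - lam) * (∑ x, ∑ y, ‖f x - f y‖ ^ 2) / ((1 - lam) * Fintype.card V ^ 2) := by
        field_simp
    _ ≤ Fintype.card V * (∑ x, ∑ y, M x y * ‖f x - f y‖ ^ 2) /
          ((1 - lam) * Fintype.card V ^ 2) := by
        gcongr
    _ = 1 / (1 - lam) * (1 / Fintype.card V * ∑ x, ∑ y, M x y * ‖f x - f y‖ ^ 2) := by
        field_simp

/-- (Spectral gap Poincaré inequality for Hilbert-space-valued maps.)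
If `M` is a symmetric stochastic matrix on a nonempty finite set `V` whose quadratic form
on mean-zero real functions is bounded by `λ < 1` times the squared `ℓ₂` norm, then for
every map `f` of `V` into a complex inner product space `H`,
`(1/|V|²)·Σ_{x,y} ‖f x - f y‖² ≤ (1/(1-λ))·(1/|V|)·Σ_{x,y} M x y·‖f x - f y‖²`. -/
theorem poincare_of_spectral_gap {V : Type*} [Fintype V] [Nonempty V]
    {H : Type*} [NormedAddCommGroup H] [InnerProductSpace ℂ H]
    (M : V → V → ℝ)
    (hsymm : ∀ x y, M x y = M y x)
    (hnn : ∀ x y, 0 ≤ M x y)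
    (hrow : ∀ x, ∑ y, M x y = 1)
    (lam : ℝ) (hlam0 : 0 ≤ lam) (hlam1 : lam < 1)
    (hgap : ∀ g : V → ℝ, (∑ x, g x) = 0 →
      (∑ x, ∑ y, M x y * g x * g y) ≤ lam * ∑ x, g x ^ 2)
    (f : V → H) :
    (1 / (Fintype.card V : ℝ) ^ 2) * ∑ x, ∑ y, ‖f x - f y‖ ^ 2 ≤
      (1 / (1 - lam)) *
        ((1 / (Fintype.card V : ℝ)) * ∑ x, ∑ y, M x y * ‖f x - f y‖ ^ 2) :=
  poincare_of_spectral_gap_general M hsymm hrow lam hlam1 hgap f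
end
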